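/- Every maximal cherry-reduction sequence of a rooted orchard network is complete. -/

import Mathlib

/-!  Formalisation preliminaries for rooted and unrooted binary phylogenetic
networks, cherry reductions, cherry-reduction sequences and cherry-picking
sequences, following Döcker & Linz. -/

/-- A finite directed graph whose vertices are natural numbers. -/
structure DNet where
  verts : Finset ℕ
  arcs : Finset (ℕ × ℕ)

namespace DNet

/-- in-degree of a vertex -/
def inDeg (N : DNet) (v : ℕ) : ℕ := (N.arcs.filter (fun p => p.2 = v)).card

/-- out-degree of a vertex -/
def outDeg (N : DNet) (v : ℕ) : ℕ := (N.arcs.filter (fun p => p.1 = v)).card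

/-- the arc relation -/
def Arc (N : DNet) (u v : ℕ) : Prop := (u, v) ∈ N.arcs

/-- the digraph has no directed cycle -/
def Acyclic (N : DNet) : Prop := ∀ v, ¬ Relation.TransGen N.Arc v v

/-- root: in-degree 0 and out-degree 2 -/
def IsRoot (N : DNet) (v : ℕ) : Prop := v ∈ N.verts ∧ N.inDeg v = 0 ∧ N.outDeg v = 2

/-- leaf: in-degree 1 and out-degree 0 -/
def IsLeaf (N : DNet) (v : ℕ) : Prop := v ∈ N.verts ∧ N.inDeg v = 1 ∧ N.outDeg v = 0

/-- tree vertex: in-degree 1 and out-degree 2 -/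
def IsTreeVertex (N : DNet) (v : ℕ) : Prop := v ∈ N.verts ∧ N.inDeg v = 1 ∧ N.outDeg v = 2

/-- reticulation: in-degree 2 and out-degree 1 -/
def IsRet (N : DNet) (v : ℕ) : Prop := v ∈ N.verts ∧ N.inDeg v = 2 ∧ N.outDeg v = 1

/-- the network consists of a single vertex -/
def SingleVertex (N : DNet) : Prop := N.verts.card = 1 ∧ N.arcs = ∅

/-- the reticulation number of a rooted network: number of in-degree-2 vertices -/
def retNum (N : DNet) : ℕ := (N.verts.filter (fun v => N.inDeg v = 2)).card

/-- tree-child: every vertex with a child has a child that is a tree vertex or a leaf -/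
def TreeChild (N : DNet) : Prop :=
  ∀ v ∈ N.verts, N.outDeg v ≠ 0 → ∃ c, (v, c) ∈ N.arcs ∧ (N.IsTreeVertex c ∨ N.IsLeaf c)

/-- a stack: two reticulations joined by an arc -/
def HasStack (N : DNet) : Prop := ∃ u v, N.IsRet u ∧ N.IsRet v ∧ (u, v) ∈ N.arcs

/-- a pair of sibling reticulations: two reticulations with a common parent -/
def HasSiblingRets (N : DNet) : Prop :=
  ∃ p u v, u ≠ v ∧ N.IsRet u ∧ N.IsRet v ∧ (p, u) ∈ N.arcs ∧ (p, v) ∈ N.arcs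

/-- stack-free -/
def StackFree (N : DNet) : Prop := ¬ N.HasStack

end DNet

/-- `N` is a rooted binary phylogenetic network with leaf set `X`
(including the degenerate single-vertex network when `|X| = 1`). -/
def IsRootedBinaryNet (N : DNet) (X : Finset ℕ) : Prop :=
  (∃ x, X = {x} ∧ N.verts = {x} ∧ N.arcs = ∅) ∨
  ((∀ p ∈ N.arcs, p.1 ∈ N.verts ∧ p.2 ∈ N.verts) ∧
   (∀ p ∈ N.arcs, p.1 ≠ p.2) ∧
   N.Acyclic ∧
   (∃! ρ, ρ ∈ N.verts ∧ N.inDeg ρ = 0) ∧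
   (∀ v ∈ N.verts, N.IsRoot v ∨ N.IsLeaf v ∨ N.IsTreeVertex v ∨ N.IsRet v) ∧
   (∀ v, N.IsLeaf v ↔ v ∈ X))

/-- `[a,b]` is a cherry of the rooted network `N` (with `a` the leaf to be deleted). -/
def RCherry (N : DNet) (a b : ℕ) : Prop :=
  a ≠ b ∧ N.IsLeaf a ∧ N.IsLeaf b ∧ ∃ p, (p, a) ∈ N.arcs ∧ (p, b) ∈ N.arcs

/-- `(a,b)` is a reticulated cherry of the rooted network `N` with reticulation leaf `a`:
the parent of `a` is a reticulation and receives an arc from the parent of `b`. -/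
def RRetCherry (N : DNet) (a b : ℕ) : Prop :=
  a ≠ b ∧ N.IsLeaf a ∧ N.IsLeaf b ∧
  ∃ pa pb, (pa, a) ∈ N.arcs ∧ (pb, b) ∈ N.arcs ∧ N.IsRet pa ∧ (pb, pa) ∈ N.arcs

/-- `M` is obtained from the rooted network `N` by reducing the cherry `[a,b]`:
delete `a` and suppress (or, if it is the root, delete) the resulting degree-2 vertex. -/
def RReduceCherry (N M : DNet) (a b : ℕ) : Prop :=
  RCherry N a b ∧
  ∃ p, (p, a) ∈ N.arcs ∧ (p, b) ∈ N.arcs ∧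
    ((N.inDeg p = 0 ∧ M.verts = N.verts \ {a, p} ∧ M.arcs = N.arcs \ {(p, a), (p, b)}) ∨
     (∃ g, (g, p) ∈ N.arcs ∧ M.verts = N.verts \ {a, p} ∧
        M.arcs = insert (g, b) (N.arcs \ {(g, p), (p, a), (p, b)})))

/-- `M` is obtained from the rooted network `N` by reducing the reticulated cherry `(a,b)`
with reticulation leaf `a`: delete the reticulation arc `(p_b, p_a)` and suppress the two
resulting degree-2 vertices. -/
def RReduceRetCherry (N M : DNet) (a b : ℕ) : Prop :=
  RRetCherry N a b ∧
  ∃ pa pb qa qb, (pa, a) ∈ N.arcs ∧ (pb, b) ∈ N.arcs ∧ N.IsRet pa ∧ (pb, pa) ∈ N.arcs ∧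
    (qa, pa) ∈ N.arcs ∧ qa ≠ pb ∧ (qb, pb) ∈ N.arcs ∧
    M.verts = N.verts \ {pa, pb} ∧
    M.arcs = insert (qa, a) (insert (qb, b)
      (N.arcs \ {(pb, pa), (pa, a), (qa, pa), (pb, b), (qb, pb)}))

/-- A recorded reduction: either a cherry pair `[x,y]` or a reticulated-cherry pair `(x,y)`
(the deleted leaf, resp. the reticulation leaf, is listed first). -/
inductive Pick where
  | cherry (x y : ℕ)
  | ret (x y : ℕ)
deriving DecidableEq

namespace Pick

/-- first coordinate -/
def fst : Pick → ℕ
  | cherry x _ => x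
  | ret x _ => x

/-- second coordinate -/
def snd : Pick → ℕ
  | cherry _ y => y
  | ret _ y => y

/-- the pair contains the element `z` -/
def Contains (r : Pick) (z : ℕ) : Prop := r.fst = z ∨ r.snd = z

/-- the pair is a reticulated-cherry pair -/
def IsRetPair : Pick → Prop
  | cherry _ _ => False
  | ret _ _ => True

/-- the pair is a cherry pair -/
def IsCherryPair : Pick → Prop
  | cherry _ _ => True
  | ret _ _ => False

end Pick

/-- The step from `N` to `M` is the cherry reduction recorded by the pick `r`
(rooted version). -/
def RStep (N M : DNet) : Pick → Prop
  | .cherry x y => RReduceCherry N M x y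
  | .ret x y => RReduceRetCherry N M x y

/-- `(Ns 0, …, Ns k)` is a cherry-reduction sequence of rooted networks whose associated
cherry-picking sequence is `(rs 0, …, rs (k-1))`. -/
def RCherrySeq (Ns : ℕ → DNet) (rs : ℕ → Pick) (k : ℕ) : Prop :=
  ∀ i < k, RStep (Ns i) (Ns (i + 1)) (rs i)

/-- `(Ns 0, …, Ns k)` is a cherry-reduction sequence of rooted networks. -/
def RReductionSeq (Ns : ℕ → DNet) (k : ℕ) : Prop :=
  ∀ i < k, ∃ r, RStep (Ns i) (Ns (i + 1)) r

/-- `R` is a rooted orchard network: it admits a complete cherry-reduction sequence. -/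
def Orchard (R : DNet) : Prop :=
  ∃ Ns k, Ns 0 = R ∧ RReductionSeq Ns k ∧ (Ns k).SingleVertex

/-- `j = s(i)`: the smallest index `j > i` (within the sequence of length `k`) such that
`rs j` contains the first coordinate of `rs i`. -/
def SuccAt (rs : ℕ → Pick) (k i j : ℕ) : Prop :=
  i < j ∧ j < k ∧ (rs j).Contains (rs i).fst ∧
  ∀ l, i < l → l < j → ¬ (rs l).Contains (rs i).fst

/-- Property (P1): the successor pair of every reticulated-cherry pair, if it exists,
is a cherry pair. -/
def SeqP1 (rs : ℕ → Pick) (k : ℕ) : Prop :=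
  ∀ i j, (rs i).IsRetPair → SuccAt rs k i j → (rs j).IsCherryPair

/-- Property (P2): no element of the sequence is the successor pair of two distinct
reticulated-cherry pairs. -/
def SeqP2 (rs : ℕ → Pick) (k : ℕ) : Prop :=
  ∀ i i' j, i ≠ i' → (rs i).IsRetPair → (rs i').IsRetPair →
    SuccAt rs k i j → SuccAt rs k i' j → False

/-- A tree-child cherry-picking sequence: one satisfying (P1) and (P2). -/
def TreeChildSeq (rs : ℕ → Pick) (k : ℕ) : Prop := SeqP1 rs k ∧ SeqP2 rs k

/-- Property (P3): the first coordinate of each pair does not occur as the second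
coordinate of any later pair. -/
def SeqP3 (rs : ℕ → Pick) (k : ℕ) : Prop :=
  ∀ i j, i < j → j < k → (rs i).fst ≠ (rs j).snd

/-- A finite undirected graph whose vertices are natural numbers. -/
structure UNet where
  verts : Finset ℕ
  edges : Finset (Sym2 ℕ)

namespace UNet

/-- degree of a vertex -/
def deg (U : UNet) (v : ℕ) : ℕ := (U.edges.filter (fun e => v ∈ e)).card

/-- adjacency -/
def Adj (U : UNet) (u v : ℕ) : Prop := u ≠ v ∧ s(u, v) ∈ U.edges

/-- connectedness -/
def Connected (U : UNet) : Prop :=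
  ∀ u ∈ U.verts, ∀ v ∈ U.verts, Relation.ReflTransGen U.Adj u v

/-- leaf: degree-1 vertex -/
def IsLeaf (U : UNet) (v : ℕ) : Prop := v ∈ U.verts ∧ U.deg v = 1

/-- the network consists of a single vertex -/
def SingleVertex (U : UNet) : Prop := U.verts.card = 1 ∧ U.edges = ∅

/-- the reticulation number of an unrooted network: `|E| - (|V| - 1)` -/
def retNum (U : UNet) : ℕ := U.edges.card - (U.verts.card - 1)

end UNet

/-- `U` is an unrooted binary phylogenetic network with leaf set `X`
(including the degenerate single-vertex network when `|X| = 1`). -/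
def IsUnrootedBinaryNet (U : UNet) (X : Finset ℕ) : Prop :=
  (∃ x, X = {x} ∧ U.verts = {x} ∧ U.edges = ∅) ∨
  ((∀ e ∈ U.edges, ¬ e.IsDiag ∧ ∀ v ∈ e, v ∈ U.verts) ∧
   U.Connected ∧
   (∀ v ∈ U.verts, U.deg v = 1 ∨ U.deg v = 3) ∧
   (∀ v, U.IsLeaf v ↔ v ∈ X))

/-- `[a,b]` is a cherry of the unrooted network `U`. -/
def UCherry (U : UNet) (a b : ℕ) : Prop :=
  a ≠ b ∧ U.IsLeaf a ∧ U.IsLeaf b ∧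
  ((∃ p, s(a, p) ∈ U.edges ∧ s(b, p) ∈ U.edges ∧ p ≠ a ∧ p ≠ b) ∨ U.edges = {s(a, b)})

/-- the edge `{u,v}` lies on a cycle of `U` -/
def UOnCycle (U : UNet) (u v : ℕ) : Prop :=
  s(u, v) ∈ U.edges ∧
  Relation.ReflTransGen (fun x y => x ≠ y ∧ s(x, y) ∈ U.edges ∧ s(x, y) ≠ s(u, v)) u v

/-- `(a,b)` is a reticulated cherry of the unrooted network `U` with reticulation
edge `{u,v}`. -/
def URetCherry (U : UNet) (a b : ℕ) : Prop :=
  a ≠ b ∧ U.IsLeaf a ∧ U.IsLeaf b ∧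
  ∃ u v, s(a, u) ∈ U.edges ∧ s(u, v) ∈ U.edges ∧ s(v, b) ∈ U.edges ∧
    u ≠ v ∧ u ≠ a ∧ v ≠ b ∧ UOnCycle U u v

/-- `W` is obtained from `U` by reducing the cherry `[a,b]`: delete `a` and, if `U` has
at least two edges, suppress the resulting degree-2 vertex. -/
def UReduceCherry (U W : UNet) (a b : ℕ) : Prop :=
  UCherry U a b ∧
  ((U.edges = {s(a, b)} ∧ W.verts = U.verts \ {a} ∧ W.edges = ∅) ∨
   (∃ p g, s(a, p) ∈ U.edges ∧ s(b, p) ∈ U.edges ∧ s(p, g) ∈ U.edges ∧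
      p ≠ a ∧ p ≠ b ∧ g ≠ a ∧ g ≠ b ∧ g ≠ p ∧
      W.verts = U.verts \ {a, p} ∧
      W.edges = insert s(b, g) (U.edges \ {s(a, p), s(b, p), s(p, g)})))

/-- `W` is obtained from `U` by reducing the reticulated cherry `(a,b)`: delete the
reticulation edge `{u,v}` and suppress the two resulting degree-2 vertices. -/
def UReduceRetCherry (U W : UNet) (a b : ℕ) : Prop :=
  URetCherry U a b ∧
  ∃ u v ga gb, s(a, u) ∈ U.edges ∧ s(u, v) ∈ U.edges ∧ s(v, b) ∈ U.edges ∧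
    u ≠ v ∧ u ≠ a ∧ v ≠ b ∧ UOnCycle U u v ∧
    s(u, ga) ∈ U.edges ∧ ga ≠ a ∧ ga ≠ v ∧ ga ≠ u ∧
    s(v, gb) ∈ U.edges ∧ gb ≠ b ∧ gb ≠ u ∧ gb ≠ v ∧
    W.verts = U.verts \ {u, v} ∧
    W.edges = insert s(a, ga) (insert s(b, gb)
      (U.edges \ {s(u, v), s(a, u), s(u, ga), s(v, b), s(v, gb)}))

/-- The step from `U` to `W` is the cherry reduction recorded by the pick `r`
(unrooted version). -/
def UStep (U W : UNet) : Pick → Prop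
  | .cherry x y => UReduceCherry U W x y
  | .ret x y => UReduceRetCherry U W x y

/-- `(Us 0, …, Us k)` is a cherry-reduction sequence of unrooted networks whose associated
cherry-picking sequence is `(rs 0, …, rs (k-1))`. -/
def UCherrySeq (Us : ℕ → UNet) (rs : ℕ → Pick) (k : ℕ) : Prop :=
  ∀ i < k, UStep (Us i) (Us (i + 1)) (rs i)

/-- `(Us 0, …, Us k)` is a cherry-reduction sequence of unrooted networks. -/
def UReductionSeq (Us : ℕ → UNet) (k : ℕ) : Prop :=
  ∀ i < k, ∃ r, UStep (Us i) (Us (i + 1)) r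

/-- The rooted network `R` is an orientation of the unrooted network `U`: `U` is obtained
from `R` by forgetting arc directions and suppressing the root. -/
def IsOrientationOf (R : DNet) (U : UNet) : Prop :=
  (R.arcs = ∅ ∧ U.edges = ∅ ∧ U.verts = R.verts) ∨
  (∃ ρ c₁ c₂, ρ ∈ R.verts ∧ R.inDeg ρ = 0 ∧ c₁ ≠ c₂ ∧
    (ρ, c₁) ∈ R.arcs ∧ (ρ, c₂) ∈ R.arcs ∧
    U.verts = R.verts.erase ρ ∧
    U.edges = insert s(c₁, c₂)
      ((R.arcs.filter (fun p => p.1 ≠ ρ)).image (fun p => s(p.1, p.2))))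

/-- `U` is an unrooted tree-child network on `X`: it has a tree-child orientation. -/
def UnrootedTreeChild (U : UNet) (X : Finset ℕ) : Prop :=
  ∃ R : DNet, IsRootedBinaryNet R X ∧ R.TreeChild ∧ IsOrientationOf R U

/-- The pick `r` is one of the picks associated with the recorded reduction `p`:
it must agree with `p` on cherry reductions, and may swap the two coordinates of a
reticulated-cherry reduction. -/
def PickAssoc : Pick → Pick → Prop
  | .cherry x y, r => r = .cherry x y
  | .ret x y, r => r = .ret x y ∨ r = .ret y x

/-- `X`-labelled isomorphism of unrooted networks. -/
def UIso (X : Finset ℕ) (U W : UNet) : Prop :=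
  ∃ f : ℕ → ℕ, Set.BijOn f ↑U.verts ↑W.verts ∧ (∀ x ∈ X, f x = x) ∧
    W.edges = U.edges.image (Sym2.map f)

/-! ### Auxiliary development -/

namespace CherryAux

open Finset

/-- A "proper" rooted binary network (structural part, no leaf-labelling). -/
def Proper (N : DNet) : Prop :=
  (∀ p ∈ N.arcs, p.1 ∈ N.verts ∧ p.2 ∈ N.verts) ∧
  (∀ p ∈ N.arcs, p.1 ≠ p.2) ∧ N.Acyclic ∧
  (∃! ρ, ρ ∈ N.verts ∧ N.inDeg ρ = 0) ∧
  (∀ v ∈ N.verts, N.IsRoot v ∨ N.IsLeaf v ∨ N.IsTreeVertex v ∨ N.IsRet v)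

def Good (N : DNet) : Prop := N.SingleVertex ∨ Proper N

lemma good_of_binary {N : DNet} {X : Finset ℕ} (h : IsRootedBinaryNet N X) : Good N := by
  rcases h with ⟨x, _, hv, ha⟩ | ⟨h1, h2, h3, h4, h5, _⟩
  · exact Or.inl ⟨by simp [hv], ha⟩
  · exact Or.inr ⟨h1, h2, h3, h4, h5⟩

lemma dnet_ext {M M' : DNet} (hv : M.verts = M'.verts) (ha : M.arcs = M'.arcs) : M = M' := by
  cases M; cases M'; simp_all

/-! #### small cardinality pigeonhole lemmas -/

lemma two_mem_card_one {α} [DecidableEq α] {s : Finset α} {a b : α}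
    (h : s.card ≤ 1) (ha : a ∈ s) (hb : b ∈ s) : a = b := by
  exact Finset.card_le_one.mp h a ha b hb

lemma three_mem_card_two {α} [DecidableEq α] {s : Finset α} {a b c : α}
    (h : s.card ≤ 2) (ha : a ∈ s) (hb : b ∈ s) (hc : c ∈ s) : a = b ∨ a = c ∨ b = c := by
  by_contra hcon
  push_neg at hcon
  have hsub : ({a, b, c} : Finset α) ⊆ s := by
    intro x hx; simp only [Finset.mem_insert, Finset.mem_singleton] at hx
    rcases hx with rfl | rfl | rfl <;> assumption
  have hcard := Finset.card_le_card hsub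
  rw [Finset.card_insert_of_notMem (by simp [hcon.1, hcon.2.1]),
      Finset.card_insert_of_notMem (by simp [hcon.2.2]), Finset.card_singleton] at hcard
  omega

/-! #### basic degree lemmas -/

lemma mem_indeg_filter {N : DNet} {u v : ℕ} (h : (u, v) ∈ N.arcs) :
    (u, v) ∈ N.arcs.filter (fun p => p.2 = v) := by simp [h]

lemma mem_outdeg_filter {N : DNet} {u v : ℕ} (h : (u, v) ∈ N.arcs) :
    (u, v) ∈ N.arcs.filter (fun p => p.1 = u) := by simp [h]

lemma parent_unique {N : DNet} {v : ℕ} (h : N.inDeg v ≤ 1) {p q : ℕ}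
    (hp : (p, v) ∈ N.arcs) (hq : (q, v) ∈ N.arcs) : p = q := by
  have := two_mem_card_one h (mem_indeg_filter hp) (mem_indeg_filter hq)
  exact congrArg Prod.fst this

lemma child_unique {N : DNet} {v : ℕ} (h : N.outDeg v ≤ 1) {p q : ℕ}
    (hp : (v, p) ∈ N.arcs) (hq : (v, q) ∈ N.arcs) : p = q := by
  have h1 : (v, p) ∈ N.arcs.filter (fun e => e.1 = v) := by simp [hp]
  have h2 : (v, q) ∈ N.arcs.filter (fun e => e.1 = v) := by simp [hq]
  exact congrArg Prod.snd (two_mem_card_one h h1 h2)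

lemma no_out_of_outDeg_zero {N : DNet} {v w : ℕ} (h : N.outDeg v = 0) :
    (v, w) ∉ N.arcs := by
  intro hm
  have : (v, w) ∈ N.arcs.filter (fun e => e.1 = v) := by simp [hm]
  rw [DNet.outDeg, Finset.card_eq_zero] at h
  simp [h] at this

lemma no_in_of_inDeg_zero {N : DNet} {v w : ℕ} (h : N.inDeg v = 0) :
    (w, v) ∉ N.arcs := by
  intro hm
  have : (w, v) ∈ N.arcs.filter (fun e => e.2 = v) := by simp [hm]
  rw [DNet.inDeg, Finset.card_eq_zero] at h
  simp [h] at this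

lemma exists_parent {N : DNet} {v : ℕ} (h : N.inDeg v ≠ 0) : ∃ u, (u, v) ∈ N.arcs := by
  rw [DNet.inDeg, Finset.card_ne_zero, Finset.filter_nonempty_iff] at h
  obtain ⟨e, he, h2⟩ := h
  exact ⟨e.1, by rwa [show (e.1, v) = e by ext <;> simp [h2]]⟩

lemma outDeg_pos_of_arc {N : DNet} {u v : ℕ} (h : (u, v) ∈ N.arcs) : N.outDeg u ≠ 0 := by
  intro h0; exact no_out_of_outDeg_zero h0 h

lemma inDeg_pos_of_arc {N : DNet} {u v : ℕ} (h : (u, v) ∈ N.arcs) : N.inDeg v ≠ 0 := by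
  intro h0; exact no_in_of_inDeg_zero h0 h

lemma child_mem {N : DNet} {v : ℕ} {x y : ℕ} (hdeg : N.outDeg v ≤ 2)
    (hx : (v, x) ∈ N.arcs) (hy : (v, y) ∈ N.arcs) (hxy : x ≠ y) {z : ℕ}
    (hz : (v, z) ∈ N.arcs) : z = x ∨ z = y := by
  have h1 : (v, x) ∈ N.arcs.filter (fun e => e.1 = v) := by simp [hx]
  have h2 : (v, y) ∈ N.arcs.filter (fun e => e.1 = v) := by simp [hy]
  have h3 : (v, z) ∈ N.arcs.filter (fun e => e.1 = v) := by simp [hz]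
  rcases three_mem_card_two hdeg h3 h1 h2 with h | h | h
  · exact Or.inl (congrArg Prod.snd h)
  · exact Or.inr (congrArg Prod.snd h)
  · exact absurd (congrArg Prod.snd h) hxy

lemma parent_mem {N : DNet} {v : ℕ} {x y : ℕ} (hdeg : N.inDeg v ≤ 2)
    (hx : (x, v) ∈ N.arcs) (hy : (y, v) ∈ N.arcs) (hxy : x ≠ y) {z : ℕ}
    (hz : (z, v) ∈ N.arcs) : z = x ∨ z = y := by
  rcases three_mem_card_two hdeg (mem_indeg_filter hz) (mem_indeg_filter hx)
    (mem_indeg_filter hy) with h | h | h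
  · exact Or.inl (congrArg Prod.fst h)
  · exact Or.inr (congrArg Prod.fst h)
  · exact absurd (congrArg Prod.fst h) hxy

lemma outDeg_two_of_children {N : DNet} {v x y : ℕ}
    (hx : (v, x) ∈ N.arcs) (hy : (v, y) ∈ N.arcs) (hxy : x ≠ y) : 2 ≤ N.outDeg v := by
  have h1 : (v, x) ∈ N.arcs.filter (fun e => e.1 = v) := by simp [hx]
  have h2 : (v, y) ∈ N.arcs.filter (fun e => e.1 = v) := by simp [hy]
  have : ({(v, x), (v, y)} : Finset (ℕ × ℕ)) ⊆ N.arcs.filter (fun e => e.1 = v) := by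
    intro e he; simp only [Finset.mem_insert, Finset.mem_singleton] at he
    rcases he with rfl | rfl <;> assumption
  have := Finset.card_le_card this
  rwa [Finset.card_insert_of_notMem (by simp [hxy]), Finset.card_singleton] at this

lemma inDeg_two_of_parents {N : DNet} {v x y : ℕ}
    (hx : (x, v) ∈ N.arcs) (hy : (y, v) ∈ N.arcs) (hxy : x ≠ y) : 2 ≤ N.inDeg v := by
  have : ({(x, v), (y, v)} : Finset (ℕ × ℕ)) ⊆ N.arcs.filter (fun e => e.2 = v) := by
    intro e he; simp only [Finset.mem_insert, Finset.mem_singleton] at he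
    rcases he with rfl | rfl
    · exact mem_indeg_filter hx
    · exact mem_indeg_filter hy
  have := Finset.card_le_card this
  rwa [Finset.card_insert_of_notMem (by simp [hxy]), Finset.card_singleton] at this

/-! #### the filter-card surgery lemma -/

lemma filter_sdiff' (A S : Finset (ℕ × ℕ)) (Q : ℕ × ℕ → Prop) [DecidablePred Q] :
    (A \ S).filter Q = A.filter Q \ S.filter Q := by
  ext e; simp only [Finset.mem_filter, Finset.mem_sdiff]; tauto

lemma filter_card_surg (A S T : Finset (ℕ × ℕ)) (Q : ℕ × ℕ → Prop) [DecidablePred Q]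
    (hS : S ⊆ A) (hT : ∀ e ∈ T, e ∉ A) :
    ((T ∪ (A \ S)).filter Q).card = (A.filter Q).card - (S.filter Q).card + (T.filter Q).card := by
  have hd : Disjoint (T.filter Q) ((A \ S).filter Q) := by
    rw [Finset.disjoint_left]
    intro e he1 he2
    exact hT e (Finset.mem_filter.mp he1).1 (Finset.mem_sdiff.mp (Finset.mem_filter.mp he2).1).1
  rw [Finset.filter_union, Finset.card_union_of_disjoint hd, filter_sdiff',
    Finset.card_sdiff_of_subset (Finset.filter_subset_filter _ hS)]
  omega

lemma filter_card_le (A S : Finset (ℕ × ℕ)) (Q : ℕ × ℕ → Prop) [DecidablePred Q] (hS : S ⊆ A) :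
    (S.filter Q).card ≤ (A.filter Q).card :=
  Finset.card_le_card (Finset.filter_subset_filter _ hS)

end CherryAux
namespace CherryAux

open Finset

variable {N : DNet}

lemma Proper.no_self (hP : Proper N) {u : ℕ} : (u, u) ∉ N.arcs := fun h => hP.2.1 _ h rfl

lemma Proper.arc_ne (hP : Proper N) {u v : ℕ} (h : (u, v) ∈ N.arcs) : u ≠ v := hP.2.1 _ h

lemma Proper.src_mem (hP : Proper N) {u v : ℕ} (h : (u, v) ∈ N.arcs) : u ∈ N.verts :=
  (hP.1 _ h).1

lemma Proper.tgt_mem (hP : Proper N) {u v : ℕ} (h : (u, v) ∈ N.arcs) : v ∈ N.verts :=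
  (hP.1 _ h).2

/-- the source of an arc has out-degree 1 or 2 and in-degree at most 2 -/
lemma Proper.src_class (hP : Proper N) {u v : ℕ} (h : (u, v) ∈ N.arcs) :
    N.IsRoot u ∨ N.IsTreeVertex u ∨ N.IsRet u := by
  rcases hP.2.2.2.2 u (hP.src_mem h) with hc | hc | hc | hc
  · exact Or.inl hc
  · exact absurd h (no_out_of_outDeg_zero hc.2.2)
  · exact Or.inr (Or.inl hc)
  · exact Or.inr (Or.inr hc)

lemma Proper.tgt_class (hP : Proper N) {u v : ℕ} (h : (u, v) ∈ N.arcs) :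
    N.IsLeaf v ∨ N.IsTreeVertex v ∨ N.IsRet v := by
  rcases hP.2.2.2.2 v (hP.tgt_mem h) with hc | hc | hc | hc
  · exact absurd h (no_in_of_inDeg_zero hc.2.1)
  · exact Or.inl hc
  · exact Or.inr (Or.inl hc)
  · exact Or.inr (Or.inr hc)

/-- a vertex with two distinct children has out-degree 2 and in-degree ≤ 1 -/
lemma Proper.two_children (hP : Proper N) {p x y : ℕ}
    (hx : (p, x) ∈ N.arcs) (hy : (p, y) ∈ N.arcs) (hxy : x ≠ y) :
    N.outDeg p = 2 ∧ N.inDeg p ≤ 1 := by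
  rcases hP.src_class hx with hc | hc | hc
  · exact ⟨hc.2.2, by rw [hc.2.1]; omega⟩
  · exact ⟨hc.2.2, le_of_eq hc.2.1⟩
  · have h1 := hc.2.2
    have h2 := outDeg_two_of_children hx hy hxy
    omega

/-- a non-leaf vertex with a parent is a tree vertex or reticulation;
    in particular if it has two distinct children it has in-degree exactly 1 -/
lemma Proper.tree_of_children_parent (hP : Proper N) {p x y g : ℕ}
    (hx : (p, x) ∈ N.arcs) (hy : (p, y) ∈ N.arcs) (hxy : x ≠ y) (hg : (g, p) ∈ N.arcs) :
    N.inDeg p = 1 := by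
  have h2 := (hP.two_children hx hy hxy).2
  have := inDeg_pos_of_arc hg
  omega

lemma Proper.leaf_parent_unique (hP : Proper N) {a p q : ℕ} (hl : N.IsLeaf a)
    (hp : (p, a) ∈ N.arcs) (hq : (q, a) ∈ N.arcs) : p = q :=
  parent_unique (le_of_eq hl.2.1) hp hq

lemma Proper.leaf_no_out (hP : Proper N) {a v : ℕ} (hl : N.IsLeaf a) : (a, v) ∉ N.arcs :=
  no_out_of_outDeg_zero hl.2.2

lemma Proper.ret_child_unique (hP : Proper N) {a p q : ℕ} (hr : N.IsRet a)
    (hp : (a, p) ∈ N.arcs) (hq : (a, q) ∈ N.arcs) : p = q :=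
  child_unique (le_of_eq hr.2.2) hp hq

/-! #### acyclicity by simulation -/

lemma acyclic_of_simulation {M : DNet} (hN : N.Acyclic)
    (h : ∀ u v, M.Arc u v → Relation.TransGen N.Arc u v) : M.Acyclic := by
  intro v hv
  apply hN v
  have : Relation.TransGen (Relation.TransGen N.Arc) v v := Relation.TransGen.mono h _ _ hv
  rwa [Relation.transGen_idem] at this

/-! #### reachability from the root -/

lemma reach_root (hP : Proper N) {ρ : ℕ} (hρ : ρ ∈ N.verts ∧ N.inDeg ρ = 0) :
    ∀ v ∈ N.verts, Relation.ReflTransGen N.Arc ρ v := by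
  classical
  by_contra hcon
  push_neg at hcon
  obtain ⟨v, hv, hnr⟩ := hcon
  set Sf := N.verts.filter (fun u => ¬ Relation.ReflTransGen N.Arc ρ u) with hSf
  have hvS : v ∈ Sf := by simp [hSf, hv, hnr]
  -- every element of Sf has a parent in Sf
  have hpar : ∀ u ∈ Sf, ∃ w ∈ Sf, (w, u) ∈ N.arcs := by
    intro u hu
    rw [hSf, Finset.mem_filter] at hu
    have hne : u ≠ ρ := by rintro rfl; exact hu.2 Relation.ReflTransGen.refl
    have hin : N.inDeg u ≠ 0 := by
      intro h0
      exact hne (hP.2.2.2.1.unique ⟨hu.1, h0⟩ hρ)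
    obtain ⟨w, hw⟩ := exists_parent hin
    refine ⟨w, ?_, hw⟩
    rw [hSf, Finset.mem_filter]
    refine ⟨hP.src_mem hw, fun hrw => hu.2 (hrw.tail hw)⟩
  -- build an infinite ancestor chain inside the finite set Sf
  have : ∀ u : {z // z ∈ Sf}, ∃ w : {z // z ∈ Sf}, (w.1, u.1) ∈ N.arcs := by
    intro ⟨u, hu⟩
    obtain ⟨w, hwS, hw⟩ := hpar u hu
    exact ⟨⟨w, hwS⟩, hw⟩
  choose F hF using this
  set g : ℕ → {z // z ∈ Sf} := fun n => F^[n] ⟨v, hvS⟩ with hg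
  have hstep : ∀ n, ((g (n + 1)).1, (g n).1) ∈ N.arcs := by
    intro n
    have : g (n + 1) = F (g n) := by
      rw [hg]; simp [Function.iterate_succ_apply']
    rw [this]; exact hF (g n)
  have hchain0 : ∀ m j, Relation.TransGen N.Arc (g (m + j + 1)).1 (g m).1 := by
    intro m j
    induction j with
    | zero => exact Relation.TransGen.single (hstep m)
    | succ j ih => exact ih.head (hstep (m + j + 1))
  have hchain : ∀ m n, m < n → Relation.TransGen N.Arc (g n).1 (g m).1 := by
    intro m n hmn
    have : n = m + (n - m - 1) + 1 := by omega
    rw [this]; exact hchain0 m (n - m - 1)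
  obtain ⟨a, b, hab, heq⟩ := Finite.exists_ne_map_eq_of_infinite g
  rcases Nat.lt_or_ge a b with h | h
  · exact hP.2.2.1 _ (heq ▸ hchain a b h)
  · have h' : b < a := by omega
    exact hP.2.2.1 _ (heq.symm ▸ hchain b a h')

/-- if the root's two children are distinct leaves, the network is a triple -/
lemma root_leaves (hP : Proper N) {ρ x y : ℕ} (hρv : ρ ∈ N.verts) (hρ : N.inDeg ρ = 0)
    (hx : (ρ, x) ∈ N.arcs) (hy : (ρ, y) ∈ N.arcs) (hxy : x ≠ y)
    (hlx : N.IsLeaf x) (hly : N.IsLeaf y) :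
    N.verts = {ρ, x, y} ∧ N.arcs = {(ρ, x), (ρ, y)} := by
  have hout : N.outDeg ρ = 2 := (hP.two_children hx hy hxy).1
  have hreach : ∀ w, Relation.ReflTransGen N.Arc ρ w → w = ρ ∨ w = x ∨ w = y := by
    intro w hw
    induction hw with
    | refl => exact Or.inl rfl
    | @tail b c hb hbc ih =>
      rcases ih with h | h | h
      · subst h
        rcases child_mem (le_of_eq hout) hx hy hxy hbc with h2 | h2
        · exact Or.inr (Or.inl h2)
        · exact Or.inr (Or.inr h2)
      · subst h; exact absurd hbc (hP.leaf_no_out hlx)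
      · subst h; exact absurd hbc (hP.leaf_no_out hly)
  constructor
  · apply Finset.Subset.antisymm
    · intro w hw
      rcases hreach w (reach_root hP ⟨hρv, hρ⟩ w hw) with h | h | h <;> simp [h]
    · intro w hw
      simp only [Finset.mem_insert, Finset.mem_singleton] at hw
      rcases hw with rfl | rfl | rfl
      · exact hρv
      · exact hlx.1
      · exact hly.1
  · apply Finset.Subset.antisymm
    · intro e he
      rcases hreach e.1 (reach_root hP ⟨hρv, hρ⟩ e.1 (hP.src_mem he)) with h1 | h1 | h1
      · have he' : (ρ, e.2) ∈ N.arcs := by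
          rwa [show (ρ, e.2) = e by ext <;> simp [h1]]
        rcases child_mem (le_of_eq hout) hx hy hxy he' with h2 | h2 <;>
          simp [Finset.mem_insert, Prod.ext_iff, h1, h2]
      · have he' : (x, e.2) ∈ N.arcs := by
          rwa [show (x, e.2) = e by ext <;> simp [h1]]
        exact absurd he' (hP.leaf_no_out hlx)
      · have he' : (y, e.2) ∈ N.arcs := by
          rwa [show (y, e.2) = e by ext <;> simp [h1]]
        exact absurd he' (hP.leaf_no_out hly)
    · intro e he
      simp only [Finset.mem_insert, Finset.mem_singleton] at he
      rcases he with rfl | rfl <;> assumption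

end CherryAux
namespace CherryAux

open Finset

variable {N : DNet}

/-! ### internal cherry reduction: data and resulting network -/

structure CData (N : DNet) (x y p g : ℕ) : Prop where
  hx : (p, x) ∈ N.arcs
  hy : (p, y) ∈ N.arcs
  hxy : x ≠ y
  hlx : N.IsLeaf x
  hly : N.IsLeaf y
  hg : (g, p) ∈ N.arcs

def cherryRes (N : DNet) (x y p g : ℕ) : DNet :=
  ⟨N.verts \ {x, p}, insert (g, y) (N.arcs \ {(g, p), (p, x), (p, y)})⟩

variable {x y p g : ℕ}

namespace CData

lemma pnx (hP : Proper N) (d : CData N x y p g) : p ≠ x := hP.arc_ne d.hx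
lemma pny (hP : Proper N) (d : CData N x y p g) : p ≠ y := hP.arc_ne d.hy
lemma gnp (hP : Proper N) (d : CData N x y p g) : g ≠ p := hP.arc_ne d.hg
lemma gnx (hP : Proper N) (d : CData N x y p g) : g ≠ x := by
  intro h; exact hP.leaf_no_out d.hlx (h ▸ d.hg)
lemma gny (hP : Proper N) (d : CData N x y p g) : g ≠ y := by
  intro h; exact hP.leaf_no_out d.hly (h ▸ d.hg)
lemma outp (hP : Proper N) (d : CData N x y p g) : N.outDeg p = 2 :=
  (hP.two_children d.hx d.hy d.hxy).1
lemma inp (hP : Proper N) (d : CData N x y p g) : N.inDeg p = 1 :=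
  hP.tree_of_children_parent d.hx d.hy d.hxy d.hg
lemma gy_not_mem (hP : Proper N) (d : CData N x y p g) : (g, y) ∉ N.arcs := by
  intro h; exact d.gnp hP (hP.leaf_parent_unique d.hly h d.hy)
lemma child_eq (hP : Proper N) (d : CData N x y p g) {z : ℕ} (hz : (p, z) ∈ N.arcs) :
    z = x ∨ z = y := child_mem (le_of_eq (d.outp hP)) d.hx d.hy d.hxy hz
lemma parent_eq (hP : Proper N) (d : CData N x y p g) {z : ℕ} (hz : (z, p) ∈ N.arcs) :
    z = g := parent_unique (le_of_eq (d.inp hP)) hz d.hg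

lemma S_sub (d : CData N x y p g) :
    ({(g, p), (p, x), (p, y)} : Finset (ℕ × ℕ)) ⊆ N.arcs := by
  intro e he; simp only [Finset.mem_insert, Finset.mem_singleton] at he
  rcases he with rfl | rfl | rfl
  · exact d.hg
  · exact d.hx
  · exact d.hy

lemma arcs_eq :
    (cherryRes N x y p g).arcs
      = ({(g, y)} : Finset (ℕ × ℕ)) ∪ (N.arcs \ {(g, p), (p, x), (p, y)}) := by
  exact Finset.insert_eq _ _

lemma mem_arcs {e : ℕ × ℕ} :
    e ∈ (cherryRes N x y p g).arcs
      ↔ e = (g, y) ∨ (e ∈ N.arcs ∧ e ≠ (g, p) ∧ e ≠ (p, x) ∧ e ≠ (p, y)) := by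
  simp only [cherryRes, Finset.mem_insert, Finset.mem_sdiff, Finset.mem_singleton]
  tauto

lemma mem_verts {v : ℕ} :
    v ∈ (cherryRes N x y p g).verts ↔ v ∈ N.verts ∧ v ≠ x ∧ v ≠ p := by
  simp [cherryRes]

lemma old_arc_mem (hP : Proper N) (d : CData N x y p g) {e : ℕ × ℕ} (he : e ∈ N.arcs)
    (h1 : e ≠ (g, p)) (h2 : e ≠ (p, x)) (h3 : e ≠ (p, y)) :
    e ∈ (cherryRes N x y p g).arcs := mem_arcs.mpr (Or.inr ⟨he, h1, h2, h3⟩)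

lemma inDeg_eq (hP : Proper N) (d : CData N x y p g) {v : ℕ} (hvp : v ≠ p) (hvx : v ≠ x) :
    (cherryRes N x y p g).inDeg v = N.inDeg v := by
  have hgy : ∀ e ∈ ({(g, y)} : Finset (ℕ × ℕ)), e ∉ N.arcs := by
    simpa using d.gy_not_mem hP
  have hle := filter_card_le N.arcs {(g, p), (p, x), (p, y)} (fun e => e.2 = v) d.S_sub
  have hcards : ((({(g, p), (p, x), (p, y)} : Finset (ℕ × ℕ))).filter (fun e => e.2 = v)).card
      = ((({(g, y)} : Finset (ℕ × ℕ))).filter (fun e => e.2 = v)).card := by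
    by_cases hvy : v = y
    · subst hvy
      simp [Finset.filter_insert, Finset.filter_singleton, Ne.symm hvp, Ne.symm hvx,
        d.pny hP, d.hxy]
    · simp [Finset.filter_insert, Finset.filter_singleton, Ne.symm hvp, Ne.symm hvx,
        Ne.symm hvy]
  show ((cherryRes N x y p g).arcs.filter (fun e => e.2 = v)).card = _
  rw [arcs_eq, filter_card_surg _ _ _ _ d.S_sub hgy, hcards]
  have h2 : (N.arcs.filter (fun e => e.2 = v)).card = N.inDeg v := rfl
  rw [hcards] at hle
  omega

lemma outDeg_eq (hP : Proper N) (d : CData N x y p g) {v : ℕ} (hvp : v ≠ p) :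
    (cherryRes N x y p g).outDeg v = N.outDeg v := by
  have hgy : ∀ e ∈ ({(g, y)} : Finset (ℕ × ℕ)), e ∉ N.arcs := by
    simpa using d.gy_not_mem hP
  have hle := filter_card_le N.arcs {(g, p), (p, x), (p, y)} (fun e => e.1 = v) d.S_sub
  have hcards : ((({(g, p), (p, x), (p, y)} : Finset (ℕ × ℕ))).filter (fun e => e.1 = v)).card
      = ((({(g, y)} : Finset (ℕ × ℕ))).filter (fun e => e.1 = v)).card := by
    by_cases hvg : v = g
    · subst hvg
      simp [Finset.filter_insert, Finset.filter_singleton, Ne.symm hvp, d.gnp hP]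
    · simp [Finset.filter_insert, Finset.filter_singleton, Ne.symm hvp, Ne.symm hvg]
  show ((cherryRes N x y p g).arcs.filter (fun e => e.1 = v)).card = _
  rw [arcs_eq, filter_card_surg _ _ _ _ d.S_sub hgy, hcards]
  have h2 : (N.arcs.filter (fun e => e.1 = v)).card = N.outDeg v := rfl
  rw [hcards] at hle
  omega

/-- endpoints of surviving arcs avoid `x` and `p` -/
lemma ends_ok (hP : Proper N) (d : CData N x y p g) {e : ℕ × ℕ}
    (he : e ∈ (cherryRes N x y p g).arcs) :
    e.1 ∈ N.verts ∧ e.2 ∈ N.verts ∧ e.1 ≠ x ∧ e.1 ≠ p ∧ e.2 ≠ x ∧ e.2 ≠ p := by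
  obtain ⟨e1, e2⟩ := e
  rcases mem_arcs.mp he with h | ⟨heN, h1, h2, h3⟩
  · obtain ⟨rfl, rfl⟩ : e1 = g ∧ e2 = y := Prod.ext_iff.mp h
    exact ⟨hP.src_mem d.hg, hP.tgt_mem d.hy, d.gnx hP, d.gnp hP,
      Ne.symm d.hxy, Ne.symm (d.pny hP)⟩
  · refine ⟨hP.src_mem heN, hP.tgt_mem heN, ?_, ?_, ?_, ?_⟩
    · rintro rfl; exact hP.leaf_no_out d.hlx heN
    · rintro rfl
      rcases d.child_eq hP heN with rfl | rfl
      · exact h2 rfl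
      · exact h3 rfl
    · rintro rfl
      have h4 := hP.leaf_parent_unique d.hlx heN d.hx
      exact h2 (by rw [h4])
    · rintro rfl
      have h4 := d.parent_eq hP heN
      exact h1 (by rw [h4])

lemma proper (hP : Proper N) (d : CData N x y p g) : Proper (cherryRes N x y p g) := by
  obtain ⟨ρ, hρ, hρu⟩ := hP.2.2.2.1
  have hρx : ρ ≠ x := by rintro rfl; rw [d.hlx.2.1] at hρ; exact one_ne_zero hρ.2
  have hρp : ρ ≠ p := by rintro rfl; rw [d.inp hP] at hρ; exact one_ne_zero hρ.2
  refine ⟨?_, ?_, ?_, ?_, ?_⟩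
  · intro e he
    have h := d.ends_ok hP he
    exact ⟨mem_verts.mpr ⟨h.1, h.2.2.1, h.2.2.2.1⟩,
      mem_verts.mpr ⟨h.2.1, h.2.2.2.2.1, h.2.2.2.2.2⟩⟩
  · intro e he
    rcases mem_arcs.mp he with rfl | ⟨he, _, _, _⟩
    · exact d.gny hP
    · exact hP.arc_ne he
  · refine acyclic_of_simulation hP.2.2.1 ?_
    intro u v huv
    rcases mem_arcs.mp huv with h | ⟨h, _, _, _⟩
    · obtain ⟨rfl, rfl⟩ : u = g ∧ v = y := ⟨congrArg Prod.fst h, congrArg Prod.snd h⟩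
      exact (Relation.TransGen.single d.hg).tail d.hy
    · exact Relation.TransGen.single h
  · refine ⟨ρ, ⟨mem_verts.mpr ⟨hρ.1, hρx, hρp⟩, by rw [d.inDeg_eq hP hρp hρx]; exact hρ.2⟩, ?_⟩
    rintro v ⟨hv, hv0⟩
    obtain ⟨hvN, hvx, hvp⟩ := mem_verts.mp hv
    exact hρu v ⟨hvN, by rwa [d.inDeg_eq hP hvp hvx] at hv0⟩
  · intro v hv
    obtain ⟨hvN, hvx, hvp⟩ := mem_verts.mp hv
    have hi := d.inDeg_eq hP hvp hvx
    have ho := d.outDeg_eq hP hvp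
    rcases hP.2.2.2.2 v hvN with h | h | h | h
    · exact Or.inl ⟨hv, by rw [hi]; exact h.2.1, by rw [ho]; exact h.2.2⟩
    · exact Or.inr (Or.inl ⟨hv, by rw [hi]; exact h.2.1, by rw [ho]; exact h.2.2⟩)
    · exact Or.inr (Or.inr (Or.inl ⟨hv, by rw [hi]; exact h.2.1, by rw [ho]; exact h.2.2⟩))
    · exact Or.inr (Or.inr (Or.inr ⟨hv, by rw [hi]; exact h.2.1, by rw [ho]; exact h.2.2⟩))

lemma isLeaf_iff (hP : Proper N) (d : CData N x y p g) {v : ℕ} :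
    (cherryRes N x y p g).IsLeaf v ↔ N.IsLeaf v ∧ v ≠ x := by
  constructor
  · rintro ⟨hv, h1, h2⟩
    obtain ⟨hvN, hvx, hvp⟩ := mem_verts.mp hv
    rw [d.inDeg_eq hP hvp hvx] at h1
    rw [d.outDeg_eq hP hvp] at h2
    exact ⟨⟨hvN, h1, h2⟩, hvx⟩
  · rintro ⟨⟨hv, h1, h2⟩, hvx⟩
    have hvp : v ≠ p := by rintro rfl; rw [d.inp hP] at h1; rw [d.outp hP] at h2; omega
    exact ⟨mem_verts.mpr ⟨hv, hvx, hvp⟩, by rwa [d.inDeg_eq hP hvp hvx],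
      by rwa [d.outDeg_eq hP hvp]⟩

/-- reducing an internal cherry is a reduction step -/
lemma step (hP : Proper N) (d : CData N x y p g) :
    RReduceCherry N (cherryRes N x y p g) x y := by
  refine ⟨⟨d.hxy, d.hlx, d.hly, p, d.hx, d.hy⟩, p, d.hx, d.hy, Or.inr ⟨g, d.hg, rfl, rfl⟩⟩

end CData

end CherryAux
namespace CherryAux

open Finset

variable {N : DNet}

/-! ### reticulated-cherry reduction: data and resulting network -/

structure RData (N : DNet) (x y pa pb qa qb : ℕ) : Prop where
  hpax : (pa, x) ∈ N.arcs
  hpby : (pb, y) ∈ N.arcs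
  hxy : x ≠ y
  hlx : N.IsLeaf x
  hly : N.IsLeaf y
  hret : N.IsRet pa
  hpbpa : (pb, pa) ∈ N.arcs
  hqa : (qa, pa) ∈ N.arcs
  hqapb : qa ≠ pb
  hqb : (qb, pb) ∈ N.arcs

def retRes (N : DNet) (x y pa pb qa qb : ℕ) : DNet :=
  ⟨N.verts \ {pa, pb},
   insert (qa, x) (insert (qb, y)
     (N.arcs \ {(pb, pa), (pa, x), (qa, pa), (pb, y), (qb, pb)}))⟩

variable {x y pa pb qa qb : ℕ}

namespace RData

lemma panx (hP : Proper N) (d : RData N x y pa pb qa qb) : pa ≠ x := hP.arc_ne d.hpax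
lemma pbny (hP : Proper N) (d : RData N x y pa pb qa qb) : pb ≠ y := hP.arc_ne d.hpby
lemma pbnpa (hP : Proper N) (d : RData N x y pa pb qa qb) : pb ≠ pa := hP.arc_ne d.hpbpa
lemma qanpa (hP : Proper N) (d : RData N x y pa pb qa qb) : qa ≠ pa := hP.arc_ne d.hqa
lemma qbnpb (hP : Proper N) (d : RData N x y pa pb qa qb) : qb ≠ pb := hP.arc_ne d.hqb
lemma pany (d : RData N x y pa pb qa qb) : pa ≠ y := by
  intro h; have h1 := d.hret.2.1; rw [h, d.hly.2.1] at h1; omega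
lemma ynpa (d : RData N x y pa pb qa qb) : y ≠ pa := Ne.symm d.pany
lemma outpb (hP : Proper N) (d : RData N x y pa pb qa qb) : N.outDeg pb = 2 :=
  (hP.two_children d.hpby d.hpbpa d.ynpa).1
lemma inpb (hP : Proper N) (d : RData N x y pa pb qa qb) : N.inDeg pb = 1 :=
  hP.tree_of_children_parent d.hpby d.hpbpa d.ynpa d.hqb
lemma pbnx (hP : Proper N) (d : RData N x y pa pb qa qb) : pb ≠ x := by
  intro h; have h1 := d.outpb hP; rw [h, d.hlx.2.2] at h1; omega
lemma pb_child (hP : Proper N) (d : RData N x y pa pb qa qb) {z : ℕ}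
    (hz : (pb, z) ∈ N.arcs) : z = y ∨ z = pa :=
  child_mem (le_of_eq (d.outpb hP)) d.hpby d.hpbpa d.ynpa hz
lemma pa_child (hP : Proper N) (d : RData N x y pa pb qa qb) {z : ℕ}
    (hz : (pa, z) ∈ N.arcs) : z = x :=
  hP.ret_child_unique d.hret hz d.hpax
lemma pa_parent (hP : Proper N) (d : RData N x y pa pb qa qb) {z : ℕ}
    (hz : (z, pa) ∈ N.arcs) : z = pb ∨ z = qa :=
  parent_mem (le_of_eq d.hret.2.1) d.hpbpa d.hqa (Ne.symm d.hqapb) hz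
lemma pb_parent (hP : Proper N) (d : RData N x y pa pb qa qb) {z : ℕ}
    (hz : (z, pb) ∈ N.arcs) : z = qb :=
  parent_unique (le_of_eq (d.inpb hP)) hz d.hqb
lemma x_parent (hP : Proper N) (d : RData N x y pa pb qa qb) {z : ℕ}
    (hz : (z, x) ∈ N.arcs) : z = pa := hP.leaf_parent_unique d.hlx hz d.hpax
lemma y_parent (hP : Proper N) (d : RData N x y pa pb qa qb) {z : ℕ}
    (hz : (z, y) ∈ N.arcs) : z = pb := hP.leaf_parent_unique d.hly hz d.hpby
lemma qanx (hP : Proper N) (d : RData N x y pa pb qa qb) : qa ≠ x := by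
  intro h; exact hP.leaf_no_out d.hlx (h ▸ d.hqa)
lemma qany (hP : Proper N) (d : RData N x y pa pb qa qb) : qa ≠ y := by
  intro h; exact hP.leaf_no_out d.hly (h ▸ d.hqa)
lemma qbnx (hP : Proper N) (d : RData N x y pa pb qa qb) : qb ≠ x := by
  intro h; exact hP.leaf_no_out d.hlx (h ▸ d.hqb)
lemma qbny (hP : Proper N) (d : RData N x y pa pb qa qb) : qb ≠ y := by
  intro h; exact hP.leaf_no_out d.hly (h ▸ d.hqb)
lemma qbnpa (hP : Proper N) (d : RData N x y pa pb qa qb) : qb ≠ pa := by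
  intro h
  have h1 : (pa, pb) ∈ N.arcs := h ▸ d.hqb
  exact d.pbnx hP (d.pa_child hP h1)
lemma qax_not_mem (hP : Proper N) (d : RData N x y pa pb qa qb) : (qa, x) ∉ N.arcs := by
  intro h; exact d.qanpa hP (d.x_parent hP h)
lemma qby_not_mem (hP : Proper N) (d : RData N x y pa pb qa qb) : (qb, y) ∉ N.arcs := by
  intro h; exact d.qbnpb hP (d.y_parent hP h)

lemma S_sub (d : RData N x y pa pb qa qb) :
    ({(pb, pa), (pa, x), (qa, pa), (pb, y), (qb, pb)} : Finset (ℕ × ℕ)) ⊆ N.arcs := by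
  intro e he
  simp only [Finset.mem_insert, Finset.mem_singleton] at he
  rcases he with rfl | rfl | rfl | rfl | rfl
  · exact d.hpbpa
  · exact d.hpax
  · exact d.hqa
  · exact d.hpby
  · exact d.hqb

lemma T_not_mem (hP : Proper N) (d : RData N x y pa pb qa qb) :
    ∀ e ∈ ({(qa, x), (qb, y)} : Finset (ℕ × ℕ)), e ∉ N.arcs := by
  intro e he
  simp only [Finset.mem_insert, Finset.mem_singleton] at he
  rcases he with rfl | rfl
  · exact d.qax_not_mem hP
  · exact d.qby_not_mem hP

lemma arcs_eq :
    (retRes N x y pa pb qa qb).arcs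
      = ({(qa, x), (qb, y)} : Finset (ℕ × ℕ))
          ∪ (N.arcs \ {(pb, pa), (pa, x), (qa, pa), (pb, y), (qb, pb)}) := by
  ext e
  simp only [retRes, Finset.mem_insert, Finset.mem_union, Finset.mem_sdiff,
    Finset.mem_singleton]
  tauto

lemma mem_arcs {e : ℕ × ℕ} :
    e ∈ (retRes N x y pa pb qa qb).arcs
      ↔ e = (qa, x) ∨ e = (qb, y) ∨
        (e ∈ N.arcs ∧ e ≠ (pb, pa) ∧ e ≠ (pa, x) ∧ e ≠ (qa, pa) ∧ e ≠ (pb, y)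
          ∧ e ≠ (qb, pb)) := by
  simp only [retRes, Finset.mem_insert, Finset.mem_sdiff, Finset.mem_singleton]
  tauto

lemma mem_verts {v : ℕ} :
    v ∈ (retRes N x y pa pb qa qb).verts ↔ v ∈ N.verts ∧ v ≠ pa ∧ v ≠ pb := by
  simp [retRes]

lemma inDeg_eq (hP : Proper N) (d : RData N x y pa pb qa qb) {v : ℕ}
    (hva : v ≠ pa) (hvb : v ≠ pb) :
    (retRes N x y pa pb qa qb).inDeg v = N.inDeg v := by
  have hle := filter_card_le N.arcs {(pb, pa), (pa, x), (qa, pa), (pb, y), (qb, pb)}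
    (fun e => e.2 = v) d.S_sub
  have hcards :
      ((({(pb, pa), (pa, x), (qa, pa), (pb, y), (qb, pb)} : Finset (ℕ × ℕ))).filter
        (fun e => e.2 = v)).card
      = ((({(qa, x), (qb, y)} : Finset (ℕ × ℕ))).filter (fun e => e.2 = v)).card := by
    by_cases hvx : v = x
    · subst hvx
      simp [Finset.filter_insert, Finset.filter_singleton, d.panx hP, d.pbnx hP,
        Ne.symm d.hxy]
    · by_cases hvy : v = y
      · subst hvy
        simp [Finset.filter_insert, Finset.filter_singleton, d.pany, d.pbny hP, d.hxy]
      · simp [Finset.filter_insert, Finset.filter_singleton, Ne.symm hva, Ne.symm hvb,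
          Ne.symm hvx, Ne.symm hvy]
  show ((retRes N x y pa pb qa qb).arcs.filter (fun e => e.2 = v)).card = _
  rw [arcs_eq, filter_card_surg _ _ _ _ d.S_sub (d.T_not_mem hP), hcards]
  have h2 : (N.arcs.filter (fun e => e.2 = v)).card = N.inDeg v := rfl
  rw [hcards] at hle
  omega

lemma outDeg_eq (hP : Proper N) (d : RData N x y pa pb qa qb) {v : ℕ}
    (hva : v ≠ pa) (hvb : v ≠ pb) :
    (retRes N x y pa pb qa qb).outDeg v = N.outDeg v := by
  have hle := filter_card_le N.arcs {(pb, pa), (pa, x), (qa, pa), (pb, y), (qb, pb)}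
    (fun e => e.1 = v) d.S_sub
  have hpab : pa ≠ pb := Ne.symm (d.pbnpa hP)
  have hcards :
      ((({(pb, pa), (pa, x), (qa, pa), (pb, y), (qb, pb)} : Finset (ℕ × ℕ))).filter
        (fun e => e.1 = v)).card
      = ((({(qa, x), (qb, y)} : Finset (ℕ × ℕ))).filter (fun e => e.1 = v)).card := by
    by_cases hvqa : v = qa
    · by_cases hvqb : v = qb
      · rw [← hvqa, ← hvqb]
        simp [Finset.filter_insert, Finset.filter_singleton, Ne.symm hva, Ne.symm hvb,
          hpab, d.hxy]
      · rw [← hvqa]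
        simp [Finset.filter_insert, Finset.filter_singleton, Ne.symm hva, Ne.symm hvb,
          Ne.symm hvqb]
    · by_cases hvqb : v = qb
      · rw [← hvqb]
        simp [Finset.filter_insert, Finset.filter_singleton, Ne.symm hva, Ne.symm hvb,
          Ne.symm hvqa]
      · simp [Finset.filter_insert, Finset.filter_singleton, Ne.symm hva, Ne.symm hvb,
          Ne.symm hvqa, Ne.symm hvqb]
  show ((retRes N x y pa pb qa qb).arcs.filter (fun e => e.1 = v)).card = _
  rw [arcs_eq, filter_card_surg _ _ _ _ d.S_sub (d.T_not_mem hP), hcards]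
  have h2 : (N.arcs.filter (fun e => e.1 = v)).card = N.outDeg v := rfl
  rw [hcards] at hle
  omega

lemma ends_ok (hP : Proper N) (d : RData N x y pa pb qa qb) {e : ℕ × ℕ}
    (he : e ∈ (retRes N x y pa pb qa qb).arcs) :
    e.1 ∈ N.verts ∧ e.2 ∈ N.verts ∧ e.1 ≠ pa ∧ e.1 ≠ pb ∧ e.2 ≠ pa ∧ e.2 ≠ pb := by
  obtain ⟨e1, e2⟩ := e
  rcases mem_arcs.mp he with h | h | ⟨heN, h1, h2, h3, h4, h5⟩
  · obtain ⟨rfl, rfl⟩ : e1 = qa ∧ e2 = x := ⟨congrArg Prod.fst h, congrArg Prod.snd h⟩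
    exact ⟨hP.src_mem d.hqa, d.hlx.1, d.qanpa hP, d.hqapb,
      Ne.symm (d.panx hP), Ne.symm (d.pbnx hP)⟩
  · obtain ⟨rfl, rfl⟩ : e1 = qb ∧ e2 = y := ⟨congrArg Prod.fst h, congrArg Prod.snd h⟩
    exact ⟨hP.src_mem d.hqb, d.hly.1, d.qbnpa hP, d.qbnpb hP, Ne.symm d.pany,
      Ne.symm (d.pbny hP)⟩
  · refine ⟨hP.src_mem heN, hP.tgt_mem heN, ?_, ?_, ?_, ?_⟩
    · rintro rfl
      exact h2 (by rw [d.pa_child hP heN])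
    · rintro rfl
      rcases d.pb_child hP heN with rfl | rfl
      · exact h4 rfl
      · exact h1 rfl
    · rintro rfl
      rcases d.pa_parent hP heN with rfl | rfl
      · exact h1 rfl
      · exact h3 rfl
    · rintro rfl
      exact h5 (by rw [d.pb_parent hP heN])

lemma proper (hP : Proper N) (d : RData N x y pa pb qa qb) :
    Proper (retRes N x y pa pb qa qb) := by
  obtain ⟨ρ, hρ, hρu⟩ := hP.2.2.2.1
  have hρa : ρ ≠ pa := by rintro rfl; rw [d.hret.2.1] at hρ; omega
  have hρb : ρ ≠ pb := by rintro rfl; rw [d.inpb hP] at hρ; omega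
  refine ⟨?_, ?_, ?_, ?_, ?_⟩
  · intro e he
    have h := d.ends_ok hP he
    exact ⟨mem_verts.mpr ⟨h.1, h.2.2.1, h.2.2.2.1⟩,
      mem_verts.mpr ⟨h.2.1, h.2.2.2.2.1, h.2.2.2.2.2⟩⟩
  · intro e he
    rcases mem_arcs.mp he with h | h | ⟨heN, _, _, _, _, _⟩
    · obtain ⟨rfl, rfl⟩ : e.1 = qa ∧ e.2 = x := ⟨congrArg Prod.fst h, congrArg Prod.snd h⟩
      exact d.qanx hP
    · obtain ⟨rfl, rfl⟩ : e.1 = qb ∧ e.2 = y := ⟨congrArg Prod.fst h, congrArg Prod.snd h⟩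
      exact d.qbny hP
    · exact hP.arc_ne heN
  · refine acyclic_of_simulation hP.2.2.1 ?_
    intro u v huv
    rcases mem_arcs.mp huv with h | h | ⟨heN, _, _, _, _, _⟩
    · obtain ⟨rfl, rfl⟩ : u = qa ∧ v = x := ⟨congrArg Prod.fst h, congrArg Prod.snd h⟩
      exact (Relation.TransGen.single d.hqa).tail d.hpax
    · obtain ⟨rfl, rfl⟩ : u = qb ∧ v = y := ⟨congrArg Prod.fst h, congrArg Prod.snd h⟩
      exact (Relation.TransGen.single d.hqb).tail d.hpby
    · exact Relation.TransGen.single heN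
  · refine ⟨ρ, ⟨mem_verts.mpr ⟨hρ.1, hρa, hρb⟩, by rw [d.inDeg_eq hP hρa hρb]; exact hρ.2⟩, ?_⟩
    rintro v ⟨hv, hv0⟩
    obtain ⟨hvN, hva, hvb⟩ := mem_verts.mp hv
    exact hρu v ⟨hvN, by rwa [d.inDeg_eq hP hva hvb] at hv0⟩
  · intro v hv
    obtain ⟨hvN, hva, hvb⟩ := mem_verts.mp hv
    have hi := d.inDeg_eq hP hva hvb
    have ho := d.outDeg_eq hP hva hvb
    rcases hP.2.2.2.2 v hvN with h | h | h | h
    · exact Or.inl ⟨hv, by rw [hi]; exact h.2.1, by rw [ho]; exact h.2.2⟩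
    · exact Or.inr (Or.inl ⟨hv, by rw [hi]; exact h.2.1, by rw [ho]; exact h.2.2⟩)
    · exact Or.inr (Or.inr (Or.inl ⟨hv, by rw [hi]; exact h.2.1, by rw [ho]; exact h.2.2⟩))
    · exact Or.inr (Or.inr (Or.inr ⟨hv, by rw [hi]; exact h.2.1, by rw [ho]; exact h.2.2⟩))

lemma step (hP : Proper N) (d : RData N x y pa pb qa qb) :
    RReduceRetCherry N (retRes N x y pa pb qa qb) x y :=
  ⟨⟨d.hxy, d.hlx, d.hly, pa, pb, d.hpax, d.hpby, d.hret, d.hpbpa⟩,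
    pa, pb, qa, qb, d.hpax, d.hpby, d.hret, d.hpbpa, d.hqa, d.hqapb, d.hqb, rfl, rfl⟩

end RData

end CherryAux
namespace CherryAux

open Finset

variable {N M M' : DNet} {a b : ℕ}

/-! ### extraction of reduction data -/

lemma cherry_extract (h : RReduceCherry N M a b) :
    (∃ p, N.inDeg p = 0 ∧ (p, a) ∈ N.arcs ∧ (p, b) ∈ N.arcs ∧ a ≠ b ∧ N.IsLeaf a ∧
        N.IsLeaf b ∧ M.verts = N.verts \ {a, p} ∧ M.arcs = N.arcs \ {(p, a), (p, b)}) ∨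
    (∃ p g, CData N a b p g ∧ M = cherryRes N a b p g) := by
  obtain ⟨⟨hab, hla, hlb, _⟩, p, hpa, hpb, hbr⟩ := h
  rcases hbr with ⟨h0, hv, ha⟩ | ⟨g, hg, hv, ha⟩
  · exact Or.inl ⟨p, h0, hpa, hpb, hab, hla, hlb, hv, ha⟩
  · exact Or.inr ⟨p, g, ⟨hpa, hpb, hab, hla, hlb, hg⟩, dnet_ext hv ha⟩

lemma ret_extract (h : RReduceRetCherry N M a b) :
    ∃ pa pb qa qb, RData N a b pa pb qa qb ∧ M = retRes N a b pa pb qa qb := by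
  obtain ⟨⟨hab, hla, hlb, _⟩, pa, pb, qa, qb, h1, h2, h3, h4, h5, h6, h7, hv, ha⟩ := h
  exact ⟨pa, pb, qa, qb, ⟨h1, h2, hab, hla, hlb, h3, h4, h5, h6, h7⟩, dnet_ext hv ha⟩

/-- reducing a root cherry yields the single-vertex network -/
lemma cherry_root_single (hP : Proper N) {p : ℕ}
    (h0 : N.inDeg p = 0) (hpa : (p, a) ∈ N.arcs) (hpb : (p, b) ∈ N.arcs) (hab : a ≠ b)
    (hla : N.IsLeaf a) (hlb : N.IsLeaf b)
    (hv : M.verts = N.verts \ {a, p}) (ha : M.arcs = N.arcs \ {(p, a), (p, b)}) :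
    M.SingleVertex := by
  obtain ⟨hverts, harcs⟩ := root_leaves hP (hP.src_mem hpa) h0 hpa hpb hab hla hlb
  have hpa' : p ≠ a := hP.arc_ne hpa
  have hpb' : p ≠ b := hP.arc_ne hpb
  constructor
  · rw [hv, hverts]
    rw [show ({p, a, b} : Finset ℕ) \ {a, p} = {b} from ?_]
    · exact Finset.card_singleton b
    · ext z
      simp only [Finset.mem_sdiff, Finset.mem_insert, Finset.mem_singleton]
      constructor
      · rintro ⟨rfl | rfl | rfl, hz⟩ <;> tauto
      · rintro rfl
        exact ⟨by tauto, by push_neg; exact ⟨hab.symm, Ne.symm hpb'⟩⟩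
  · rw [ha, harcs]
    ext e
    simp only [Finset.mem_sdiff, Finset.mem_insert, Finset.mem_singleton,
      Finset.notMem_empty, iff_false]
    rintro ⟨rfl | rfl, hz⟩ <;> tauto

/-! ### determinism -/

lemma cherry_det (hP : Proper N) (h : RReduceCherry N M a b) (h' : RReduceCherry N M' a b) :
    M = M' := by
  have hla : N.IsLeaf a := h.1.2.1
  rcases cherry_extract h with ⟨p, h0, hpa, hpb, _, _, _, hv, ha⟩ | ⟨p, g, d, rfl⟩ <;>
    rcases cherry_extract h' with ⟨p', h0', hpa', hpb', _, _, _, hv', ha'⟩ | ⟨p', g', d', rfl⟩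
  · obtain rfl : p = p' := hP.leaf_parent_unique hla hpa hpa'
    exact dnet_ext (hv.trans hv'.symm) (ha.trans ha'.symm)
  · obtain rfl : p = p' := hP.leaf_parent_unique hla hpa d'.hx
    exact absurd d'.hg (no_in_of_inDeg_zero h0)
  · obtain rfl : p = p' := hP.leaf_parent_unique hla d.hx hpa'
    exact absurd d.hg (no_in_of_inDeg_zero h0')
  · obtain rfl : p = p' := hP.leaf_parent_unique hla d.hx d'.hx
    obtain rfl : g = g' := (d.parent_eq hP d'.hg).symm
    rfl

lemma ret_det (hP : Proper N) (h : RReduceRetCherry N M a b) (h' : RReduceRetCherry N M' a b) :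
    M = M' := by
  obtain ⟨pa, pb, qa, qb, d, rfl⟩ := ret_extract h
  obtain ⟨pa', pb', qa', qb', d', rfl⟩ := ret_extract h'
  obtain rfl : pa = pa' := hP.leaf_parent_unique d.hlx d.hpax d'.hpax
  obtain rfl : pb = pb' := hP.leaf_parent_unique d.hly d.hpby d'.hpby
  obtain rfl : qa = qa' := by
    rcases d.pa_parent hP d'.hqa with h1 | h1
    · exact absurd h1 d'.hqapb
    · exact h1.symm
  obtain rfl : qb = qb' := (d.pb_parent hP d'.hqb).symm
  rfl

lemma step_det (hP : Proper N) {r : Pick} (h : RStep N M r) (h' : RStep N M' r) : M = M' := by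
  cases r with
  | cherry x y => exact cherry_det hP h h'
  | ret x y => exact ret_det hP h h'

/-! ### Good preservation and basic orchard lemmas -/

lemma single_no_leaf (h : N.SingleVertex) : ¬ N.IsLeaf a := by
  rintro ⟨_, h1, _⟩
  rw [DNet.inDeg, h.2] at h1
  simp at h1

lemma single_no_step (h : N.SingleVertex) {r : Pick} : ¬ RStep N M r := by
  cases r with
  | cherry x y => exact fun hs => single_no_leaf h hs.1.2.1
  | ret x y => exact fun hs => single_no_leaf h hs.1.2.1

lemma good_step (hG : Good N) {r : Pick} (h : RStep N M r) : Good M := by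
  rcases hG with hS | hP
  · exact absurd h (single_no_step hS)
  cases r with
  | cherry x y =>
    rcases cherry_extract h with ⟨p, h0, hpa, hpb, hab, hla, hlb, hv, ha⟩ | ⟨p, g, d, rfl⟩
    · exact Or.inl (cherry_root_single hP h0 hpa hpb hab hla hlb hv ha)
    · exact Or.inr (d.proper hP)
  | ret x y =>
    obtain ⟨pa, pb, qa, qb, d, rfl⟩ := ret_extract h
    exact Or.inr (d.proper hP)

lemma step_card {r : Pick} (h : RStep N M r) : M.verts.card < N.verts.card := by
  have : M.verts ⊂ N.verts := by
    cases r with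
    | cherry x y =>
      have hx : x ∈ N.verts := h.1.2.1.1
      rcases cherry_extract h with ⟨p, _, _, _, _, _, _, hv, _⟩ | ⟨p, g, d, rfl⟩
      · constructor
        · rw [hv]; exact Finset.sdiff_subset
        · intro hsub
          have := hsub hx
          rw [hv] at this
          simp at this
      · constructor
        · show N.verts \ _ ⊆ _; exact Finset.sdiff_subset
        · intro hsub
          have := hsub hx
          simp [cherryRes] at this
    | ret x y =>
      obtain ⟨pa, pb, qa, qb, d, rfl⟩ := ret_extract h
      have hpa : pa ∈ N.verts := d.hret.1
      constructor
      · show N.verts \ _ ⊆ _; exact Finset.sdiff_subset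
      · intro hsub
        have := hsub hpa
        simp [retRes] at this
  exact Finset.card_lt_card this

lemma orchard_single (h : N.SingleVertex) : Orchard N :=
  ⟨fun _ => N, 0, rfl, fun i hi => absurd hi (by omega), h⟩

lemma orchard_prepend {r : Pick} (h : RStep N M r) (hM : Orchard M) : Orchard N := by
  obtain ⟨Ms, k, h0, hseq, hend⟩ := hM
  refine ⟨fun i => match i with | 0 => N | (j + 1) => Ms j, k + 1, rfl, ?_, hend⟩
  intro i hi
  match i with
  | 0 => exact ⟨r, by show RStep N (Ms 0) r; rw [h0]; exact h⟩
  | (j + 1) => exact hseq j (by omega)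

lemma orchard_step (hO : Orchard N) (hns : ¬ N.SingleVertex) :
    ∃ M r, RStep N M r ∧ Orchard M := by
  obtain ⟨Ms, k, h0, hseq, hend⟩ := hO
  cases k with
  | zero => exact absurd (h0 ▸ hend) hns
  | succ k =>
    obtain ⟨r, hr⟩ := hseq 0 (by omega)
    refine ⟨Ms 1, r, h0 ▸ hr, fun i => Ms (i + 1), k, rfl, ?_, hend⟩
    intro i hi
    exact hseq (i + 1) (by omega)

lemma orchard_pair (hO : Orchard N) (hns : ¬ N.SingleVertex) :
    ∃ a b, RCherry N a b ∨ RRetCherry N a b := by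
  obtain ⟨M, r, hstep, _⟩ := orchard_step hO hns
  cases r with
  | cherry x y => exact ⟨x, y, Or.inl hstep.1⟩
  | ret x y => exact ⟨x, y, Or.inr hstep.1⟩

end CherryAux
namespace CherryAux

open Finset

variable {N M : DNet}

/-! ### relabelling networks along a bijection -/

def mapNet (f : ℕ ≃ ℕ) (N : DNet) : DNet :=
  ⟨N.verts.image f, N.arcs.image (fun e => (f e.1, f e.2))⟩

def mapPick (f : ℕ ≃ ℕ) : Pick → Pick
  | .cherry x y => .cherry (f x) (f y)
  | .ret x y => .ret (f x) (f y)

lemma pmap_inj (f : ℕ ≃ ℕ) : Function.Injective (fun e : ℕ × ℕ => (f e.1, f e.2)) := by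
  rintro ⟨a, b⟩ ⟨c, d⟩ h
  simp only [Prod.mk.injEq, f.injective.eq_iff] at h
  simp [Prod.ext_iff, h.1, h.2]

lemma mapNet_verts (f : ℕ ≃ ℕ) {v : ℕ} : f v ∈ (mapNet f N).verts ↔ v ∈ N.verts := by
  simp [mapNet, Finset.mem_image, f.injective.eq_iff]

lemma mapNet_arcs (f : ℕ ≃ ℕ) {u v : ℕ} :
    (f u, f v) ∈ (mapNet f N).arcs ↔ (u, v) ∈ N.arcs := by
  constructor
  · intro h
    simp only [mapNet, Finset.mem_image] at h
    obtain ⟨e, he, heq⟩ := h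
    obtain ⟨rfl, rfl⟩ : e.1 = u ∧ e.2 = v := by
      have h1 := congrArg Prod.fst heq
      have h2 := congrArg Prod.snd heq
      simp only at h1 h2
      exact ⟨f.injective h1, f.injective h2⟩
    simpa using he
  · intro h
    simp only [mapNet, Finset.mem_image]
    exact ⟨(u, v), h, rfl⟩

lemma mapNet_inDeg (f : ℕ ≃ ℕ) (v : ℕ) : (mapNet f N).inDeg (f v) = N.inDeg v := by
  have key : ((N.arcs.image (fun e : ℕ × ℕ => (f e.1, f e.2))).filter (fun e => e.2 = f v))
      = (N.arcs.filter (fun e => e.2 = v)).image (fun e : ℕ × ℕ => (f e.1, f e.2)) := by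
    ext e
    simp only [Finset.mem_filter, Finset.mem_image]
    constructor
    · rintro ⟨⟨a, ha, rfl⟩, h2⟩
      exact ⟨a, ⟨ha, f.injective h2⟩, rfl⟩
    · rintro ⟨a, ⟨ha, h2⟩, rfl⟩
      exact ⟨⟨a, ha, rfl⟩, by simp [h2]⟩
  show ((N.arcs.image (fun e : ℕ × ℕ => (f e.1, f e.2))).filter (fun e => e.2 = f v)).card = _
  rw [key, Finset.card_image_of_injective _ (pmap_inj f)]
  rfl

lemma mapNet_outDeg (f : ℕ ≃ ℕ) (v : ℕ) : (mapNet f N).outDeg (f v) = N.outDeg v := by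
  have key : ((N.arcs.image (fun e : ℕ × ℕ => (f e.1, f e.2))).filter (fun e => e.1 = f v))
      = (N.arcs.filter (fun e => e.1 = v)).image (fun e : ℕ × ℕ => (f e.1, f e.2)) := by
    ext e
    simp only [Finset.mem_filter, Finset.mem_image]
    constructor
    · rintro ⟨⟨a, ha, rfl⟩, h2⟩
      exact ⟨a, ⟨ha, f.injective h2⟩, rfl⟩
    · rintro ⟨a, ⟨ha, h2⟩, rfl⟩
      exact ⟨⟨a, ha, rfl⟩, by simp [h2]⟩
  show ((N.arcs.image (fun e : ℕ × ℕ => (f e.1, f e.2))).filter (fun e => e.1 = f v)).card = _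
  rw [key, Finset.card_image_of_injective _ (pmap_inj f)]
  rfl

lemma mapNet_isLeaf (f : ℕ ≃ ℕ) {v : ℕ} : (mapNet f N).IsLeaf (f v) ↔ N.IsLeaf v := by
  unfold DNet.IsLeaf
  rw [mapNet_verts, mapNet_inDeg, mapNet_outDeg]

lemma mapNet_isRet (f : ℕ ≃ ℕ) {v : ℕ} : (mapNet f N).IsRet (f v) ↔ N.IsRet v := by
  unfold DNet.IsRet
  rw [mapNet_verts, mapNet_inDeg, mapNet_outDeg]

lemma mapNet_step (f : ℕ ≃ ℕ) {r : Pick} (h : RStep N M r) :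
    RStep (mapNet f N) (mapNet f M) (mapPick f r) := by
  cases r with
  | cherry x y =>
    obtain ⟨⟨hab, hla, hlb, p0, hp0a, hp0b⟩, p, hpa, hpb, hbr⟩ := h
    refine ⟨⟨fun h => hab (f.injective h), (mapNet_isLeaf f).mpr hla,
      (mapNet_isLeaf f).mpr hlb, f p0, (mapNet_arcs f).mpr hp0a, (mapNet_arcs f).mpr hp0b⟩,
      f p, (mapNet_arcs f).mpr hpa, (mapNet_arcs f).mpr hpb, ?_⟩
    rcases hbr with ⟨h0, hv, ha⟩ | ⟨g, hg, hv, ha⟩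
    · refine Or.inl ⟨by rw [mapNet_inDeg]; exact h0, ?_, ?_⟩
      · show (M.verts).image f = (N.verts).image f \ _
        rw [hv, Finset.image_sdiff _ _ f.injective]
        simp
      · show (M.arcs).image _ = (N.arcs).image _ \ _
        rw [ha, Finset.image_sdiff _ _ (pmap_inj f)]
        simp
    · refine Or.inr ⟨f g, (mapNet_arcs f).mpr hg, ?_, ?_⟩
      · show (M.verts).image f = (N.verts).image f \ _
        rw [hv, Finset.image_sdiff _ _ f.injective]
        simp
      · show (M.arcs).image _ = _
        rw [ha, Finset.image_insert, Finset.image_sdiff _ _ (pmap_inj f)]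
        simp [mapNet]
  | ret x y =>
    obtain ⟨⟨hab, hla, hlb, pa0, pb0, h1, h2, h3, h4⟩,
      pa, pb, qa, qb, hpax, hpby, hret, hpbpa, hqa, hqapb, hqb, hv, ha⟩ := h
    refine ⟨⟨fun h => hab (f.injective h), (mapNet_isLeaf f).mpr hla,
      (mapNet_isLeaf f).mpr hlb, f pa0, f pb0, (mapNet_arcs f).mpr h1,
      (mapNet_arcs f).mpr h2, (mapNet_isRet f).mpr h3, (mapNet_arcs f).mpr h4⟩,
      f pa, f pb, f qa, f qb, (mapNet_arcs f).mpr hpax, (mapNet_arcs f).mpr hpby,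
      (mapNet_isRet f).mpr hret, (mapNet_arcs f).mpr hpbpa, (mapNet_arcs f).mpr hqa,
      fun h => hqapb (f.injective h), (mapNet_arcs f).mpr hqb, ?_, ?_⟩
    · show (M.verts).image f = (N.verts).image f \ _
      rw [hv, Finset.image_sdiff _ _ f.injective]
      simp
    · show (M.arcs).image _ = _
      rw [ha, Finset.image_insert, Finset.image_insert,
        Finset.image_sdiff _ _ (pmap_inj f)]
      simp [mapNet]

lemma mapNet_single (f : ℕ ≃ ℕ) (h : N.SingleVertex) : (mapNet f N).SingleVertex := by
  constructor
  · show (N.verts.image f).card = 1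
    rw [Finset.card_image_of_injective _ f.injective]; exact h.1
  · show N.arcs.image _ = ∅
    rw [h.2]; simp

lemma mapNet_orchard (f : ℕ ≃ ℕ) (h : Orchard N) : Orchard (mapNet f N) := by
  obtain ⟨Ns, k, h0, hseq, hend⟩ := h
  refine ⟨fun i => mapNet f (Ns i), k, by show mapNet f (Ns 0) = _; rw [h0], ?_, mapNet_single f hend⟩
  intro i hi
  obtain ⟨r, hr⟩ := hseq i hi
  exact ⟨mapPick f r, mapNet_step f hr⟩

end CherryAux
namespace CherryAux

open Finset

variable {N : DNet}

lemma swap_cherryRes (hP : Proper N) {x y p g : ℕ} (d : CData N x y p g) :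
    cherryRes N y x p g = mapNet (Equiv.swap x y) (cherryRes N x y p g) := by
  set f := Equiv.swap x y with hf
  have hfx : f x = y := Equiv.swap_apply_left x y
  have hfy : f y = x := Equiv.swap_apply_right x y
  have hfz : ∀ z, z ≠ x → z ≠ y → f z = z := fun z h1 h2 =>
    Equiv.swap_apply_of_ne_of_ne h1 h2
  have hfp : f p = p := hfz p (d.pnx hP) (d.pny hP)
  have hfg : f g = g := hfz g (d.gnx hP) (d.gny hP)
  have harcmem : ∀ u v, (u, v) ∈ N.arcs → (f u, f v) ∈ N.arcs := by
    intro u v huv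
    have hu1 : u ≠ x := fun h => hP.leaf_no_out d.hlx (h ▸ huv)
    have hu2 : u ≠ y := fun h => hP.leaf_no_out d.hly (h ▸ huv)
    rw [hfz u hu1 hu2]
    by_cases hv1 : v = x
    · subst hv1; rw [hfx, hP.leaf_parent_unique d.hlx huv d.hx]
      exact d.hy
    by_cases hv2 : v = y
    · subst hv2; rw [hfy, hP.leaf_parent_unique d.hly huv d.hy]
      exact d.hx
    · rw [hfz v hv1 hv2]; exact huv
  have himgV : N.verts.image f = N.verts := by
    ext z
    simp only [Finset.mem_image]
    constructor
    · rintro ⟨w, hw, rfl⟩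
      by_cases h1 : w = x
      · subst h1; rw [hfx]; exact d.hly.1
      by_cases h2 : w = y
      · subst h2; rw [hfy]; exact d.hlx.1
      · rw [hfz w h1 h2]; exact hw
    · intro hz
      by_cases h1 : z = x
      · exact ⟨y, d.hly.1, by rw [hfy, h1]⟩
      by_cases h2 : z = y
      · exact ⟨x, d.hlx.1, by rw [hfx, h2]⟩
      · exact ⟨z, hz, hfz z h1 h2⟩
  have himgA : N.arcs.image (fun e : ℕ × ℕ => (f e.1, f e.2)) = N.arcs := by
    ext e
    simp only [Finset.mem_image]
    constructor
    · rintro ⟨⟨u, v⟩, huv, rfl⟩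
      exact harcmem u v huv
    · intro he
      refine ⟨(f e.1, f e.2), harcmem e.1 e.2 (by simpa using he), ?_⟩
      simp [hf, Equiv.swap_apply_self]
  apply dnet_ext
  · show N.verts \ {y, p} = (N.verts \ {x, p}).image f
    rw [Finset.image_sdiff _ _ f.injective, himgV, Finset.image_insert,
      Finset.image_singleton, hfx, hfp]
  · show insert (g, x) (N.arcs \ {(g, p), (p, y), (p, x)})
      = (insert (g, y) (N.arcs \ {(g, p), (p, x), (p, y)})).image
          (fun e : ℕ × ℕ => (f e.1, f e.2))
    rw [Finset.image_insert, Finset.image_sdiff _ _ (pmap_inj f), himgA]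
    have h2 : ({(g, p), (p, x), (p, y)} : Finset (ℕ × ℕ)).image
        (fun e : ℕ × ℕ => (f e.1, f e.2)) = {(g, p), (p, y), (p, x)} := by
      simp [Finset.image_insert, Finset.image_singleton, hfg, hfp, hfx, hfy]
    rw [h2]
    have h1 : (f (g, y).1, f (g, y).2) = (g, x) := by simp [hfg, hfy]
    rw [h1]

lemma orchard_swap {x y p g : ℕ} (hP : Proper N) (d : CData N x y p g)
    (hO : Orchard (cherryRes N y x p g)) : Orchard (cherryRes N x y p g) := by
  have d' : CData N y x p g := ⟨d.hy, d.hx, d.hxy.symm, d.hly, d.hlx, d.hg⟩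
  rw [swap_cherryRes hP d']
  exact mapNet_orchard _ hO

end CherryAux
namespace CherryAux

open Finset

variable {N : DNet}

lemma pair_ne_snd {a b c d : ℕ} (h : b ≠ d) : (a, b) ≠ (c, d) :=
  fun he => h (congrArg Prod.snd he)

lemma pair_ne_fst {a b c d : ℕ} (h : a ≠ c) : (a, b) ≠ (c, d) :=
  fun he => h (congrArg Prod.fst he)

lemma imp_ne_snd {e : ℕ × ℕ} {a b c d : ℕ} (h : b ≠ d) : e = (a, b) → e ≠ (c, d) :=
  fun h1 h2 => h (congrArg Prod.snd (h1.symm.trans h2))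

lemma imp_ne_fst {e : ℕ × ℕ} {a b c d : ℕ} (h : a ≠ c) : e = (a, b) → e ≠ (c, d) :=
  fun h1 h2 => h (congrArg Prod.fst (h1.symm.trans h2))

lemma insert_sdiff_notmem (a : ℕ × ℕ) (s t : Finset (ℕ × ℕ)) (h : a ∉ t) :
    (insert a s) \ t = insert a (s \ t) := by
  ext e
  simp only [Finset.mem_insert, Finset.mem_sdiff]
  constructor
  · rintro ⟨rfl | he, ht⟩
    · exact Or.inl rfl
    · exact Or.inr ⟨he, ht⟩
  · rintro (rfl | ⟨he, ht⟩)
    · exact ⟨Or.inl rfl, h⟩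
    · exact ⟨Or.inr he, ht⟩

lemma insert_sdiff_mem (a : ℕ × ℕ) (s t : Finset (ℕ × ℕ)) (h : a ∈ t) :
    (insert a s) \ t = s \ t := by
  ext e
  simp only [Finset.mem_insert, Finset.mem_sdiff]
  constructor
  · rintro ⟨rfl | he, ht⟩
    · exact absurd h ht
    · exact ⟨he, ht⟩
  · rintro ⟨he, ht⟩
    exact ⟨Or.inr he, ht⟩

lemma sdiff_sdiff_union (s t u : Finset (ℕ × ℕ)) : (s \ t) \ u = s \ (t ∪ u) := by
  ext e; simp only [Finset.mem_sdiff, Finset.mem_union]; tauto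

/-! ### commutation: cherry–cherry, disjoint leaves -/

section CC

variable {x y p g z w p' g' : ℕ}

lemma cc_pers (hP : Proper N) (d : CData N x y p g) (d' : CData N z w p' g')
    (hxz : x ≠ z) (hxw : x ≠ w) (hyz : y ≠ z) (hyw : y ≠ w) :
    CData (cherryRes N x y p g) z w p' g' := by
  have pnz : p ≠ z := fun h => hP.leaf_no_out d'.hlx (h ▸ d.hx)
  have pnw : p ≠ w := fun h => hP.leaf_no_out d'.hly (h ▸ d.hx)
  have p'nx : p' ≠ x := fun h => hP.leaf_no_out d.hlx (h ▸ d'.hx)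
  have p'ny : p' ≠ y := fun h => hP.leaf_no_out d.hly (h ▸ d'.hx)
  have pnp' : p ≠ p' := by
    intro h
    have h2 := d'.hx
    rw [← h] at h2
    rcases d.child_eq hP h2 with h3 | h3
    · exact hxz h3.symm
    · exact hyz h3.symm
  refine ⟨?_, ?_, d'.hxy, ?_, ?_, ?_⟩
  · exact d.old_arc_mem hP d'.hx (pair_ne_snd (Ne.symm pnz)) (pair_ne_snd (Ne.symm hxz))
      (pair_ne_snd (Ne.symm hyz))
  · exact d.old_arc_mem hP d'.hy (pair_ne_snd (Ne.symm pnw)) (pair_ne_snd (Ne.symm hxw))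
      (pair_ne_snd (Ne.symm hyw))
  · exact (d.isLeaf_iff hP).mpr ⟨d'.hlx, Ne.symm hxz⟩
  · exact (d.isLeaf_iff hP).mpr ⟨d'.hly, Ne.symm hxw⟩
  · exact d.old_arc_mem hP d'.hg (pair_ne_snd (Ne.symm pnp')) (pair_ne_snd p'nx)
      (pair_ne_snd p'ny)

lemma cc_eq (hP : Proper N) (d : CData N x y p g) (d' : CData N z w p' g')
    (hxz : x ≠ z) (hxw : x ≠ w) (hyz : y ≠ z) (hyw : y ≠ w) :
    cherryRes (cherryRes N x y p g) z w p' g'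
      = cherryRes (cherryRes N z w p' g') x y p g := by
  have pnz : p ≠ z := fun h => hP.leaf_no_out d'.hlx (h ▸ d.hx)
  have pnw : p ≠ w := fun h => hP.leaf_no_out d'.hly (h ▸ d.hx)
  have p'nx : p' ≠ x := fun h => hP.leaf_no_out d.hlx (h ▸ d'.hx)
  have p'ny : p' ≠ y := fun h => hP.leaf_no_out d.hly (h ▸ d'.hx)
  have pnp' : p ≠ p' := by
    intro h
    have h2 := d'.hx
    rw [← h] at h2
    rcases d.child_eq hP h2 with h3 | h3
    · exact hxz h3.symm
    · exact hyz h3.symm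
  apply dnet_ext
  · show (N.verts \ {x, p}) \ {z, p'} = (N.verts \ {z, p'}) \ {x, p}
    ext v
    simp only [Finset.mem_sdiff, Finset.mem_insert, Finset.mem_singleton]
    tauto
  · show insert (g', w)
        ((insert (g, y) (N.arcs \ {(g, p), (p, x), (p, y)})) \ {(g', p'), (p', z), (p', w)})
      = insert (g, y)
        ((insert (g', w) (N.arcs \ {(g', p'), (p', z), (p', w)})) \ {(g, p), (p, x), (p, y)})
    have h1 : (g, y) ∉ ({(g', p'), (p', z), (p', w)} : Finset (ℕ × ℕ)) := by
      simp only [Finset.mem_insert, Finset.mem_singleton]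
      push_neg
      exact ⟨pair_ne_snd (Ne.symm p'ny), pair_ne_snd hyz, pair_ne_snd hyw⟩
    have h2 : (g', w) ∉ ({(g, p), (p, x), (p, y)} : Finset (ℕ × ℕ)) := by
      simp only [Finset.mem_insert, Finset.mem_singleton]
      push_neg
      exact ⟨pair_ne_snd (Ne.symm pnw), pair_ne_snd (Ne.symm hxw), pair_ne_snd (Ne.symm hyw)⟩
    rw [insert_sdiff_notmem _ _ _ h1, insert_sdiff_notmem _ _ _ h2,
      sdiff_sdiff_union, sdiff_sdiff_union]
    ext e
    simp only [Finset.mem_insert, Finset.mem_sdiff, Finset.mem_union, Finset.mem_singleton]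
    tauto

end CC

end CherryAux
namespace CherryAux

open Finset

variable {N : DNet}

/-- additional helpers on the reduced networks -/
lemma CData.isRet_of {x y p g v : ℕ} (hP : Proper N) (d : CData N x y p g)
    (h : N.IsRet v) (hvp : v ≠ p) (hvx : v ≠ x) : (cherryRes N x y p g).IsRet v :=
  ⟨CData.mem_verts.mpr ⟨h.1, hvx, hvp⟩, by rw [d.inDeg_eq hP hvp hvx]; exact h.2.1,
    by rw [d.outDeg_eq hP hvp]; exact h.2.2⟩

lemma RData.isLeaf_of {x y pa pb qa qb v : ℕ} (hP : Proper N)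
    (e : RData N x y pa pb qa qb) (h : N.IsLeaf v) (hva : v ≠ pa) (hvb : v ≠ pb) :
    (retRes N x y pa pb qa qb).IsLeaf v :=
  ⟨RData.mem_verts.mpr ⟨h.1, hva, hvb⟩, by rw [e.inDeg_eq hP hva hvb]; exact h.2.1,
    by rw [e.outDeg_eq hP hva hvb]; exact h.2.2⟩

lemma RData.old_arc_mem {x y pa pb qa qb : ℕ} (e : RData N x y pa pb qa qb)
    {ar : ℕ × ℕ} (he : ar ∈ N.arcs) (h1 : ar ≠ (pb, pa)) (h2 : ar ≠ (pa, x))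
    (h3 : ar ≠ (qa, pa)) (h4 : ar ≠ (pb, y)) (h5 : ar ≠ (qb, pb)) :
    ar ∈ (retRes N x y pa pb qa qb).arcs :=
  RData.mem_arcs.mpr (Or.inr (Or.inr ⟨he, h1, h2, h3, h4, h5⟩))

/-! ### commutation: cherry–reticulated-cherry -/

section CR

variable {x y p g z w pa pb qa qb : ℕ}

/-- all the inequality facts needed for the cherry/ret commutation -/
lemma cr_facts (hP : Proper N) (d : CData N x y p g) (e : RData N z w pa pb qa qb) :
    x ≠ pa ∧ y ≠ pa ∧ x ≠ pb ∧ y ≠ pb ∧ p ≠ pa ∧ p ≠ pb ∧ x ≠ z ∧ y ≠ z ∧ x ≠ w ∧ y ≠ w ∧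
      z ≠ p ∧ w ≠ p ∧ g ≠ pa ∧ g ≠ pb := by
  have xnpa : x ≠ pa := by
    intro h; have h1 := d.hlx.2.1; have h2 := e.hret.2.1; rw [h] at h1; omega
  have ynpa : y ≠ pa := by
    intro h; have h1 := d.hly.2.1; have h2 := e.hret.2.1; rw [h] at h1; omega
  have xnpb : x ≠ pb := by
    intro h; have h1 := d.hlx.2.2; have h2 := e.outpb hP; rw [h] at h1; omega
  have ynpb : y ≠ pb := by
    intro h; have h1 := d.hly.2.2; have h2 := e.outpb hP; rw [h] at h1; omega
  have pnpa : p ≠ pa := by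
    intro h; have h1 := d.outp hP; have h2 := e.hret.2.2; rw [h] at h1; omega
  have pnpb : p ≠ pb := by
    intro h
    have hx' := d.hx; rw [h] at hx'
    have hy' := d.hy; rw [h] at hy'
    rcases e.pb_child hP hx' with h2 | h2
    · rcases e.pb_child hP hy' with h3 | h3
      · exact d.hxy (h2.trans h3.symm)
      · exact ynpa h3
    · exact xnpa h2
  have xnz : x ≠ z := by
    intro h
    have h1 := e.hpax; rw [← h] at h1
    exact pnpa (hP.leaf_parent_unique d.hlx d.hx h1)
  have ynz : y ≠ z := by
    intro h
    have h1 := e.hpax; rw [← h] at h1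
    exact pnpa (hP.leaf_parent_unique d.hly d.hy h1)
  have xnw : x ≠ w := by
    intro h
    have h1 := e.hpby; rw [← h] at h1
    exact pnpb (hP.leaf_parent_unique d.hlx d.hx h1)
  have ynw : y ≠ w := by
    intro h
    have h1 := e.hpby; rw [← h] at h1
    exact pnpb (hP.leaf_parent_unique d.hly d.hy h1)
  have znp : z ≠ p := by
    intro h; have h1 := e.hlx.2.2; have h2 := d.outp hP; rw [h] at h1; omega
  have wnp : w ≠ p := by
    intro h; have h1 := e.hly.2.2; have h2 := d.outp hP; rw [h] at h1; omega
  have gnpa : g ≠ pa := by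
    intro h
    have h1 := d.hg; rw [h] at h1
    exact znp (e.pa_child hP h1).symm
  have gnpb : g ≠ pb := by
    intro h
    have h1 := d.hg; rw [h] at h1
    rcases e.pb_child hP h1 with h2 | h2
    · exact wnp h2.symm
    · exact pnpa h2
  exact ⟨xnpa, ynpa, xnpb, ynpb, pnpa, pnpb, xnz, ynz, xnw, ynw, znp, wnp, gnpa, gnpb⟩

/-- the reticulated cherry survives the cherry reduction -/
lemma cr_pers_ret (hP : Proper N) (d : CData N x y p g) (e : RData N z w pa pb qa qb) :
    RData (cherryRes N x y p g) z w pa pb qa qb := by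
  obtain ⟨xnpa, ynpa, xnpb, ynpb, pnpa, pnpb, xnz, ynz, xnw, ynw, znp, wnp, gnpa, gnpb⟩ :=
    cr_facts hP d e
  refine ⟨?_, ?_, e.hxy, ?_, ?_, ?_, ?_, ?_, e.hqapb, ?_⟩
  · exact d.old_arc_mem hP e.hpax (pair_ne_snd znp) (pair_ne_snd (Ne.symm xnz))
      (pair_ne_snd (Ne.symm ynz))
  · exact d.old_arc_mem hP e.hpby (pair_ne_snd wnp) (pair_ne_snd (Ne.symm xnw))
      (pair_ne_snd (Ne.symm ynw))
  · exact (d.isLeaf_iff hP).mpr ⟨e.hlx, Ne.symm xnz⟩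
  · exact (d.isLeaf_iff hP).mpr ⟨e.hly, Ne.symm xnw⟩
  · exact d.isRet_of hP e.hret (Ne.symm pnpa) (Ne.symm xnpa)
  · exact d.old_arc_mem hP e.hpbpa (pair_ne_snd (Ne.symm pnpa)) (pair_ne_snd (Ne.symm xnpa))
      (pair_ne_snd (Ne.symm ynpa))
  · exact d.old_arc_mem hP e.hqa (pair_ne_snd (Ne.symm pnpa)) (pair_ne_snd (Ne.symm xnpa))
      (pair_ne_snd (Ne.symm ynpa))
  · exact d.old_arc_mem hP e.hqb (pair_ne_snd (Ne.symm pnpb)) (pair_ne_snd (Ne.symm xnpb))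
      (pair_ne_snd (Ne.symm ynpb))

/-- the cherry survives the reticulated-cherry reduction -/
lemma cr_pers_cherry (hP : Proper N) (d : CData N x y p g) (e : RData N z w pa pb qa qb) :
    CData (retRes N z w pa pb qa qb) x y p g := by
  obtain ⟨xnpa, ynpa, xnpb, ynpb, pnpa, pnpb, xnz, ynz, xnw, ynw, znp, wnp, gnpa, gnpb⟩ :=
    cr_facts hP d e
  refine ⟨?_, ?_, d.hxy, ?_, ?_, ?_⟩
  · exact e.old_arc_mem d.hx (pair_ne_snd xnpa) (pair_ne_snd xnz) (pair_ne_snd xnpa)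
      (pair_ne_snd xnw) (pair_ne_snd xnpb)
  · exact e.old_arc_mem d.hy (pair_ne_snd ynpa) (pair_ne_snd ynz) (pair_ne_snd ynpa)
      (pair_ne_snd ynw) (pair_ne_snd ynpb)
  · exact e.isLeaf_of hP d.hlx xnpa xnpb
  · exact e.isLeaf_of hP d.hly ynpa ynpb
  · exact e.old_arc_mem d.hg (pair_ne_snd pnpa) (pair_ne_snd (Ne.symm znp))
      (pair_ne_snd pnpa) (pair_ne_snd (Ne.symm wnp)) (pair_ne_snd pnpb)

lemma cr_eq (hP : Proper N) (d : CData N x y p g) (e : RData N z w pa pb qa qb) :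
    retRes (cherryRes N x y p g) z w pa pb qa qb
      = cherryRes (retRes N z w pa pb qa qb) x y p g := by
  obtain ⟨xnpa, ynpa, xnpb, ynpb, pnpa, pnpb, xnz, ynz, xnw, ynw, znp, wnp, gnpa, gnpb⟩ :=
    cr_facts hP d e
  apply dnet_ext
  · show (N.verts \ {x, p}) \ {pa, pb} = (N.verts \ {pa, pb}) \ {x, p}
    ext v
    simp only [Finset.mem_sdiff, Finset.mem_insert, Finset.mem_singleton]
    tauto
  · show insert (qa, z) (insert (qb, w)
        ((insert (g, y) (N.arcs \ {(g, p), (p, x), (p, y)}))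
          \ {(pb, pa), (pa, z), (qa, pa), (pb, w), (qb, pb)}))
      = insert (g, y)
        ((insert (qa, z) (insert (qb, w)
          (N.arcs \ {(pb, pa), (pa, z), (qa, pa), (pb, w), (qb, pb)})))
          \ {(g, p), (p, x), (p, y)})
    have h1 : (g, y) ∉ ({(pb, pa), (pa, z), (qa, pa), (pb, w), (qb, pb)} : Finset (ℕ × ℕ)) := by
      simp only [Finset.mem_insert, Finset.mem_singleton]
      push_neg
      exact ⟨pair_ne_snd ynpa, pair_ne_snd ynz, pair_ne_snd ynpa,
        pair_ne_snd ynw, pair_ne_snd ynpb⟩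
    have h2 : (qa, z) ∉ ({(g, p), (p, x), (p, y)} : Finset (ℕ × ℕ)) := by
      simp only [Finset.mem_insert, Finset.mem_singleton]
      push_neg
      exact ⟨pair_ne_snd znp, pair_ne_snd (Ne.symm xnz), pair_ne_snd (Ne.symm ynz)⟩
    have h3 : (qb, w) ∉ ({(g, p), (p, x), (p, y)} : Finset (ℕ × ℕ)) := by
      simp only [Finset.mem_insert, Finset.mem_singleton]
      push_neg
      exact ⟨pair_ne_snd wnp, pair_ne_snd (Ne.symm xnw), pair_ne_snd (Ne.symm ynw)⟩
    rw [insert_sdiff_notmem _ _ _ h1, insert_sdiff_notmem _ _ _ h2,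
      insert_sdiff_notmem _ _ _ h3, sdiff_sdiff_union, sdiff_sdiff_union]
    ext ar
    simp only [Finset.mem_insert, Finset.mem_sdiff, Finset.mem_union, Finset.mem_singleton]
    tauto

end CR

end CherryAux
namespace CherryAux

open Finset

variable {N : DNet}

lemma RData.isRet_of {x y pa pb qa qb v : ℕ} (hP : Proper N)
    (e : RData N x y pa pb qa qb) (h : N.IsRet v) (hva : v ≠ pa) (hvb : v ≠ pb) :
    (retRes N x y pa pb qa qb).IsRet v :=
  ⟨RData.mem_verts.mpr ⟨h.1, hva, hvb⟩, by rw [e.inDeg_eq hP hva hvb]; exact h.2.1,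
    by rw [e.outDeg_eq hP hva hvb]; exact h.2.2⟩

/-! ### commutation: ret–ret, disjoint leaves -/

section RR

variable {x y pa pb qa qb z w pa' pb' qa' qb' : ℕ}

lemma rr_facts (hP : Proper N) (e : RData N x y pa pb qa qb)
    (e' : RData N z w pa' pb' qa' qb') (hxz : x ≠ z) :
    pa ≠ pa' ∧ y ≠ w ∧ y ≠ z ∧ x ≠ w ∧ pb ≠ pb' ∧
      z ≠ pa ∧ z ≠ pb ∧ w ≠ pa ∧ w ≠ pb ∧ x ≠ pa' ∧ x ≠ pb' ∧ y ≠ pa' ∧ y ≠ pb' ∧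
      pa ≠ pb' ∧ pa' ≠ pb := by
  have panpa' : pa ≠ pa' := by
    intro h
    have h1 := e'.hpax; rw [← h] at h1
    exact hxz (e.pa_child hP h1).symm
  have ynpa' : y ≠ pa' := by
    intro h; have h1 := e.hly.2.1; have h2 := e'.hret.2.1; rw [h] at h1; omega
  have xnpa' : x ≠ pa' := by
    intro h; have h1 := e.hlx.2.1; have h2 := e'.hret.2.1; rw [h] at h1; omega
  have znpa : z ≠ pa := by
    intro h; have h1 := e'.hlx.2.1; have h2 := e.hret.2.1; rw [h] at h1; omega
  have wnpa : w ≠ pa := by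
    intro h; have h1 := e'.hly.2.1; have h2 := e.hret.2.1; rw [h] at h1; omega
  have znpb : z ≠ pb := by
    intro h; have h1 := e'.hlx.2.2; have h2 := e.outpb hP; rw [h] at h1; omega
  have wnpb : w ≠ pb := by
    intro h; have h1 := e'.hly.2.2; have h2 := e.outpb hP; rw [h] at h1; omega
  have xnpb' : x ≠ pb' := by
    intro h; have h1 := e.hlx.2.2; have h2 := e'.outpb hP; rw [h] at h1; omega
  have ynpb' : y ≠ pb' := by
    intro h; have h1 := e.hly.2.2; have h2 := e'.outpb hP; rw [h] at h1; omega
  have panpb' : pa ≠ pb' := by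
    intro h; have h1 := e.hret.2.2; have h2 := e'.outpb hP; rw [h] at h1; omega
  have pa'npb : pa' ≠ pb := by
    intro h; have h1 := e'.hret.2.2; have h2 := e.outpb hP; rw [h] at h1; omega
  have ynz : y ≠ z := by
    intro h
    have h1 := e'.hpax; rw [← h] at h1
    exact pa'npb (hP.leaf_parent_unique e.hly h1 e.hpby)
  have xnw : x ≠ w := by
    intro h
    have h1 := e'.hpby; rw [← h] at h1
    exact panpb' (hP.leaf_parent_unique e.hlx e.hpax h1)
  have pbnpb' : pb ≠ pb' := by
    intro h
    have h3 := e'.hpbpa; rw [← h] at h3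
    rcases e.pb_child hP h3 with h4 | h4
    · exact ynpa' h4.symm
    · exact panpa' h4.symm
  have ynw : y ≠ w := by
    intro h
    have h1 := e'.hpby; rw [← h] at h1
    exact pbnpb' (hP.leaf_parent_unique e.hly e.hpby h1)
  exact ⟨panpa', ynw, ynz, xnw, pbnpb', znpa, znpb, wnpa, wnpb, xnpa', xnpb', ynpa',
    ynpb', panpb', pa'npb⟩

lemma rr_pers (hP : Proper N) (e : RData N x y pa pb qa qb)
    (e' : RData N z w pa' pb' qa' qb') (hxz : x ≠ z) :
    RData (retRes N x y pa pb qa qb) z w pa' pb' qa' qb' := by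
  obtain ⟨panpa', ynw, ynz, xnw, pbnpb', znpa, znpb, wnpa, wnpb, xnpa', xnpb', ynpa',
    ynpb', panpb', pa'npb⟩ := rr_facts hP e e' hxz
  refine ⟨?_, ?_, e'.hxy, ?_, ?_, ?_, ?_, ?_, e'.hqapb, ?_⟩
  · exact e.old_arc_mem e'.hpax (pair_ne_snd znpa) (pair_ne_snd (Ne.symm hxz))
      (pair_ne_snd znpa) (pair_ne_snd (Ne.symm ynz)) (pair_ne_snd znpb)
  · exact e.old_arc_mem e'.hpby (pair_ne_snd wnpa) (pair_ne_snd (Ne.symm xnw))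
      (pair_ne_snd wnpa) (pair_ne_snd (Ne.symm ynw)) (pair_ne_snd wnpb)
  · exact e.isLeaf_of hP e'.hlx znpa znpb
  · exact e.isLeaf_of hP e'.hly wnpa wnpb
  · exact e.isRet_of hP e'.hret (Ne.symm panpa') pa'npb
  · exact e.old_arc_mem e'.hpbpa (pair_ne_snd (Ne.symm panpa')) (pair_ne_snd (Ne.symm xnpa'))
      (pair_ne_snd (Ne.symm panpa')) (pair_ne_snd (Ne.symm ynpa')) (pair_ne_snd pa'npb)
  · exact e.old_arc_mem e'.hqa (pair_ne_snd (Ne.symm panpa')) (pair_ne_snd (Ne.symm xnpa'))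
      (pair_ne_snd (Ne.symm panpa')) (pair_ne_snd (Ne.symm ynpa')) (pair_ne_snd pa'npb)
  · exact e.old_arc_mem e'.hqb (pair_ne_snd (Ne.symm panpb')) (pair_ne_snd (Ne.symm xnpb'))
      (pair_ne_snd (Ne.symm panpb')) (pair_ne_snd (Ne.symm ynpb'))
      (pair_ne_snd (Ne.symm pbnpb'))

lemma rr_eq (hP : Proper N) (e : RData N x y pa pb qa qb)
    (e' : RData N z w pa' pb' qa' qb') (hxz : x ≠ z) :
    retRes (retRes N x y pa pb qa qb) z w pa' pb' qa' qb'
      = retRes (retRes N z w pa' pb' qa' qb') x y pa pb qa qb := by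
  obtain ⟨panpa', ynw, ynz, xnw, pbnpb', znpa, znpb, wnpa, wnpb, xnpa', xnpb', ynpa',
    ynpb', panpb', pa'npb⟩ := rr_facts hP e e' hxz
  apply dnet_ext
  · show (N.verts \ {pa, pb}) \ {pa', pb'} = (N.verts \ {pa', pb'}) \ {pa, pb}
    ext v
    simp only [Finset.mem_sdiff, Finset.mem_insert, Finset.mem_singleton]
    tauto
  · show insert (qa', z) (insert (qb', w)
        ((insert (qa, x) (insert (qb, y)
          (N.arcs \ {(pb, pa), (pa, x), (qa, pa), (pb, y), (qb, pb)})))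
          \ {(pb', pa'), (pa', z), (qa', pa'), (pb', w), (qb', pb')}))
      = insert (qa, x) (insert (qb, y)
        ((insert (qa', z) (insert (qb', w)
          (N.arcs \ {(pb', pa'), (pa', z), (qa', pa'), (pb', w), (qb', pb')})))
          \ {(pb, pa), (pa, x), (qa, pa), (pb, y), (qb, pb)}))
    have h1 : (qa, x) ∉ ({(pb', pa'), (pa', z), (qa', pa'), (pb', w), (qb', pb')} :
        Finset (ℕ × ℕ)) := by
      simp only [Finset.mem_insert, Finset.mem_singleton]
      push_neg
      exact ⟨pair_ne_snd xnpa', pair_ne_snd hxz, pair_ne_snd xnpa', pair_ne_snd xnw,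
        pair_ne_snd xnpb'⟩
    have h2 : (qb, y) ∉ ({(pb', pa'), (pa', z), (qa', pa'), (pb', w), (qb', pb')} :
        Finset (ℕ × ℕ)) := by
      simp only [Finset.mem_insert, Finset.mem_singleton]
      push_neg
      exact ⟨pair_ne_snd ynpa', pair_ne_snd ynz, pair_ne_snd ynpa', pair_ne_snd ynw,
        pair_ne_snd ynpb'⟩
    have h3 : (qa', z) ∉ ({(pb, pa), (pa, x), (qa, pa), (pb, y), (qb, pb)} :
        Finset (ℕ × ℕ)) := by
      simp only [Finset.mem_insert, Finset.mem_singleton]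
      push_neg
      exact ⟨pair_ne_snd znpa, pair_ne_snd (Ne.symm hxz), pair_ne_snd znpa,
        pair_ne_snd (Ne.symm ynz), pair_ne_snd znpb⟩
    have h4 : (qb', w) ∉ ({(pb, pa), (pa, x), (qa, pa), (pb, y), (qb, pb)} :
        Finset (ℕ × ℕ)) := by
      simp only [Finset.mem_insert, Finset.mem_singleton]
      push_neg
      exact ⟨pair_ne_snd wnpa, pair_ne_snd (Ne.symm xnw), pair_ne_snd wnpa,
        pair_ne_snd (Ne.symm ynw), pair_ne_snd wnpb⟩
    rw [insert_sdiff_notmem _ _ _ h1, insert_sdiff_notmem _ _ _ h2,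
      insert_sdiff_notmem _ _ _ h3, insert_sdiff_notmem _ _ _ h4,
      sdiff_sdiff_union, sdiff_sdiff_union]
    ext ar
    simp only [Finset.mem_insert, Finset.mem_sdiff, Finset.mem_union, Finset.mem_singleton]
    tauto

end RR

end CherryAux
namespace CherryAux

open Finset

variable {N : DNet}

/-! ### commutation: two reticulated cherries sharing the reticulation leaf -/

section RS

variable {x y pa pb qa qb w qb' : ℕ}

/-- the data of the second reticulated cherry `(x, w)` in normalised form -/
lemma rs_other (hP : Proper N) (e : RData N x y pa pb qa qb)
    (hw : (qa, w) ∈ N.arcs) (hlw : N.IsLeaf w) (hqb' : (qb', qa) ∈ N.arcs) :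
    RData N x w pa qa pb qb' := by
  have xnw : x ≠ w := by
    intro h
    have h1 := hw; rw [← h] at h1
    exact (e.qanpa hP) (e.x_parent hP h1)
  exact ⟨e.hpax, hw, xnw, e.hlx, hlw, e.hret, e.hqa, e.hpbpa, Ne.symm e.hqapb, hqb'⟩

lemma rs_pers (hP : Proper N) (e : RData N x y pa pb qa qb)
    (hw : (qa, w) ∈ N.arcs) (hlw : N.IsLeaf w) (hyw : y ≠ w) (hqb' : (qb', qa) ∈ N.arcs) :
    CData (retRes N x y pa pb qa qb) x w qa qb' := by
  have xnw : x ≠ w := (rs_other hP e hw hlw hqb').hxy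
  have wnpa : w ≠ pa := by
    intro h; have h1 := hlw.2.1; have h2 := e.hret.2.1; rw [h] at h1; omega
  have wnpb : w ≠ pb := by
    intro h; have h1 := hlw.2.2; have h2 := e.outpb hP; rw [h] at h1; omega
  refine ⟨?_, ?_, xnw, ?_, ?_, ?_⟩
  · exact RData.mem_arcs.mpr (Or.inl rfl)
  · exact e.old_arc_mem hw (pair_ne_snd wnpa) (pair_ne_snd (Ne.symm xnw))
      (pair_ne_snd wnpa) (pair_ne_snd (Ne.symm hyw)) (pair_ne_snd wnpb)
  · exact e.isLeaf_of hP e.hlx (Ne.symm (e.panx hP)) (Ne.symm (e.pbnx hP))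
  · exact e.isLeaf_of hP hlw wnpa wnpb
  · exact e.old_arc_mem hqb' (pair_ne_snd (e.qanpa hP)) (pair_ne_snd (e.qanx hP))
      (pair_ne_snd (e.qanpa hP)) (pair_ne_snd (e.qany hP)) (pair_ne_snd e.hqapb)

set_option maxHeartbeats 2000000 in
lemma rs_eq (hP : Proper N) (e : RData N x y pa pb qa qb)
    (hw : (qa, w) ∈ N.arcs) (hlw : N.IsLeaf w) (hyw : y ≠ w) (hqb' : (qb', qa) ∈ N.arcs) :
    cherryRes (retRes N x y pa pb qa qb) x w qa qb'
      = cherryRes (retRes N x w pa qa pb qb') x y pb qb := by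
  have e2 : RData N x w pa qa pb qb' := rs_other hP e hw hlw hqb'
  have xnw : x ≠ w := e2.hxy
  have wnpa : w ≠ pa := by
    intro h; have h1 := hlw.2.1; have h2 := e.hret.2.1; rw [h] at h1; omega
  have wnpb : w ≠ pb := by
    intro h; have h1 := hlw.2.2; have h2 := e.outpb hP; rw [h] at h1; omega
  have hqax : (qa, x) ∉ N.arcs := e.qax_not_mem hP
  have hpbx : (pb, x) ∉ N.arcs := by
    intro h
    rcases e.pb_child hP h with h1 | h1
    · exact e.hxy h1
    · exact (e.panx hP) h1.symm
  apply dnet_ext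
  · show (N.verts \ {pa, pb}) \ {x, qa} = (N.verts \ {pa, qa}) \ {x, pb}
    ext v
    simp only [Finset.mem_sdiff, Finset.mem_insert, Finset.mem_singleton]
    tauto
  · show insert (qb', w)
        ((insert (qa, x) (insert (qb, y)
          (N.arcs \ {(pb, pa), (pa, x), (qa, pa), (pb, y), (qb, pb)})))
          \ {(qb', qa), (qa, x), (qa, w)})
      = insert (qb, y)
        ((insert (pb, x) (insert (qb', w)
          (N.arcs \ {(qa, pa), (pa, x), (pb, pa), (qa, w), (qb', qa)})))
          \ {(qb, pb), (pb, x), (pb, y)})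
    have m1 : (qa, x) ∈ ({(qb', qa), (qa, x), (qa, w)} : Finset (ℕ × ℕ)) := by simp
    have m2 : (pb, x) ∈ ({(qb, pb), (pb, x), (pb, y)} : Finset (ℕ × ℕ)) := by simp
    have h1 : (qb, y) ∉ ({(qb', qa), (qa, x), (qa, w)} : Finset (ℕ × ℕ)) := by
      simp only [Finset.mem_insert, Finset.mem_singleton]
      push_neg
      exact ⟨pair_ne_snd (e.qany hP).symm.symm.symm, pair_ne_snd (Ne.symm e.hxy),
        pair_ne_snd hyw⟩
    have h2 : (qb', w) ∉ ({(qb, pb), (pb, x), (pb, y)} : Finset (ℕ × ℕ)) := by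
      simp only [Finset.mem_insert, Finset.mem_singleton]
      push_neg
      exact ⟨pair_ne_snd wnpb, pair_ne_snd (Ne.symm xnw), pair_ne_snd (Ne.symm hyw)⟩
    rw [insert_sdiff_mem _ _ _ m1, insert_sdiff_mem _ _ _ m2,
      insert_sdiff_notmem _ _ _ h1, insert_sdiff_notmem _ _ _ h2,
      sdiff_sdiff_union, sdiff_sdiff_union]
    ext ar
    have i1 : ar ∈ N.arcs → ar ≠ (qa, x) := fun ha h => hqax (h ▸ ha)
    have i2 : ar ∈ N.arcs → ar ≠ (pb, x) := fun ha h => hpbx (h ▸ ha)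
    simp only [Finset.mem_insert, Finset.mem_sdiff, Finset.mem_union, Finset.mem_singleton]
    tauto

end RS

end CherryAux
namespace CherryAux

open Finset

/-- Key lemma: any cherry reduction of an orchard network yields an orchard network. -/
lemma orchard_preserved : ∀ n (N : DNet), N.verts.card ≤ n → Good N → Orchard N →
    ∀ M r, RStep N M r → Orchard M := by
  intro n
  induction n with
  | zero =>
    intro N hn hG hO M r hstep
    rcases hG with hS | hP
    · exact absurd hstep (single_no_step hS)
    · obtain ⟨ρ, hρ, _⟩ := hP.2.2.2.1
      have := Finset.card_ne_zero_of_mem hρ.1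
      omega
  | succ n ih =>
    intro N hn hG hO M r hstep
    rcases hG with hS | hP
    · exact absurd hstep (single_no_step hS)
    have hns : ¬ N.SingleVertex := by
      intro hS; exact absurd hstep (single_no_step hS)
    obtain ⟨N1, s, hs, hO1⟩ := orchard_step hO hns
    have hG1 : Good N1 := good_step (Or.inr hP) hs
    have hcard1 : N1.verts.card ≤ n := by
      have := step_card hs; omega
    cases r with
    | cherry x y =>
      rcases cherry_extract hstep with ⟨p, h0, hpa, hpb, hab, hla, hlb, hv, ha⟩ | ⟨p, g, d, rfl⟩
      · exact orchard_single (cherry_root_single hP h0 hpa hpb hab hla hlb hv ha)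
      cases s with
      | cherry z w =>
        rcases cherry_extract hs with
          ⟨p', h0', hpa', hpb', hab', hla', hlb', hv', ha'⟩ | ⟨p', g', d', rfl⟩
        · -- the other parent is the root: impossible since p is internal
          exfalso
          obtain ⟨_, harcs⟩ := root_leaves hP (hP.src_mem hpa') h0' hpa' hpb' hab' hla' hlb'
          have hgp := d.hg
          rw [harcs] at hgp
          simp only [Finset.mem_insert, Finset.mem_singleton, Prod.mk.injEq] at hgp
          rcases hgp with ⟨_, rfl⟩ | ⟨_, rfl⟩
          · exact hP.leaf_no_out hla' d.hx
          · exact hP.leaf_no_out hlb' d.hx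
        by_cases hxz : x = z
        · subst hxz
          obtain rfl : p' = p := hP.leaf_parent_unique d.hlx d'.hx d.hx
          obtain rfl : w = y := by
            rcases d.child_eq hP d'.hy with h1 | h1
            · exact absurd h1.symm d'.hxy
            · exact h1
          obtain rfl : g' = g := d.parent_eq hP d'.hg
          exact hO1
        by_cases hxw : x = w
        · -- swapped cherry
          obtain rfl : p' = p := by
            have h1 := d'.hy
            rw [← hxw] at h1
            exact hP.leaf_parent_unique d.hlx h1 d.hx
          obtain rfl : z = y := by
            rcases d.child_eq hP d'.hx with h1 | h1
            · exact absurd h1.symm hxz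
            · exact h1
          obtain rfl : g' = g := d.parent_eq hP d'.hg
          subst hxw
          exact orchard_swap hP d hO1
        by_cases hyz : y = z
        · exfalso
          obtain rfl : p' = p := by
            have h1 := d'.hx
            rw [← hyz] at h1
            exact hP.leaf_parent_unique d.hly h1 d.hy
          rcases d'.child_eq hP d.hx with h1 | h1
          · exact hxz h1
          · exact hxw h1
        by_cases hyw : y = w
        · exfalso
          obtain rfl : p' = p := by
            have h1 := d'.hy
            rw [← hyw] at h1
            exact hP.leaf_parent_unique d.hly h1 d.hy
          rcases d'.child_eq hP d.hx with h1 | h1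
          · exact hxz h1
          · exact hxw h1
        · -- disjoint cherries
          have dp1 := cc_pers hP d d' hxz hxw hyz hyw
          have dp2 := cc_pers hP d' d (fun h => hxz h.symm) (fun h => hyz h.symm)
            (fun h => hxw h.symm) (fun h => hyw h.symm)
          have heq := cc_eq hP d d' hxz hxw hyz hyw
          have step1 : RStep (cherryRes N x y p g)
              (cherryRes (cherryRes N x y p g) z w p' g') (Pick.cherry z w) :=
            dp1.step (d.proper hP)
          have step2 : RStep (cherryRes N z w p' g')
              (cherryRes (cherryRes N z w p' g') x y p g) (Pick.cherry x y) :=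
            dp2.step (d'.proper hP)
          have hO2 := ih _ hcard1 hG1 hO1 _ _ step2
          rw [← heq] at hO2
          exact orchard_prepend step1 hO2
      | ret z w =>
        obtain ⟨pa, pb, qa, qb, e, rfl⟩ := ret_extract hs
        have pers1 := cr_pers_ret hP d e
        have pers2 := cr_pers_cherry hP d e
        have heq := cr_eq hP d e
        have step1 : RStep (cherryRes N x y p g)
            (retRes (cherryRes N x y p g) z w pa pb qa qb) (Pick.ret z w) :=
          pers1.step (d.proper hP)
        have step2 : RStep (retRes N z w pa pb qa qb)
            (cherryRes (retRes N z w pa pb qa qb) x y p g) (Pick.cherry x y) :=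
          pers2.step (e.proper hP)
        have hO2 := ih _ hcard1 hG1 hO1 _ _ step2
        rw [← heq] at hO2
        exact orchard_prepend step1 hO2
    | ret x y =>
      obtain ⟨pa, pb, qa, qb, e, rfl⟩ := ret_extract hstep
      cases s with
      | cherry z w =>
        rcases cherry_extract hs with
          ⟨p', h0', hpa', hpb', hab', hla', hlb', hv', ha'⟩ | ⟨p', g', d', rfl⟩
        · exfalso
          obtain ⟨hverts, _⟩ := root_leaves hP (hP.src_mem hpa') h0' hpa' hpb' hab' hla' hlb'
          have hmem := e.hret.1
          rw [hverts] at hmem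
          simp only [Finset.mem_insert, Finset.mem_singleton] at hmem
          have hd2 := e.hret.2.1
          rcases hmem with rfl | rfl | rfl
          · rw [h0'] at hd2; omega
          · rw [hla'.2.1] at hd2; omega
          · rw [hlb'.2.1] at hd2; omega
        · have pers1 := cr_pers_cherry hP d' e
          have pers2 := cr_pers_ret hP d' e
          have heq := cr_eq hP d' e
          have step1 : RStep (retRes N x y pa pb qa qb)
              (cherryRes (retRes N x y pa pb qa qb) z w p' g') (Pick.cherry z w) :=
            pers1.step (e.proper hP)
          have step2 : RStep (cherryRes N z w p' g')
              (retRes (cherryRes N z w p' g') x y pa pb qa qb) (Pick.ret x y) :=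
            pers2.step (d'.proper hP)
          have hO2 := ih _ hcard1 hG1 hO1 _ _ step2
          rw [heq] at hO2
          exact orchard_prepend step1 hO2
      | ret z w =>
        obtain ⟨pa', pb', qa', qb', e', rfl⟩ := ret_extract hs
        by_cases hxz : x = z
        · subst hxz
          by_cases hyw : y = w
          · subst hyw
            have := ret_det hP hstep hs
            rw [this]
            exact hO1
          · -- shared reticulation leaf
            obtain rfl : pa = pa' := (hP.leaf_parent_unique e.hlx e'.hpax e.hpax).symm
            obtain rfl : qa = pb' := by
              rcases e.pa_parent hP e'.hpbpa with h1 | h1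
              · exfalso
                have h3 := e'.hpby
                rw [h1] at h3
                rcases e.pb_child hP h3 with h2 | h2
                · exact hyw h2.symm
                · exact e'.pany h2.symm
              · exact h1.symm
            obtain rfl : pb = qa' := by
              rcases e.pa_parent hP e'.hqa with h1 | h1
              · exact h1.symm
              · exact absurd h1 e'.hqapb
            have hw : (qa, w) ∈ N.arcs := e'.hpby
            have hlw := e'.hly
            have hqb' : (qb', qa) ∈ N.arcs := e'.hqb
            have e2 := rs_other hP e hw hlw hqb'
            have pers1 := rs_pers hP e hw hlw hyw hqb'
            have pers2 : CData (retRes N x w pa qa pb qb') x y pb qb :=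
              rs_pers hP e2 e.hpby e.hly (Ne.symm hyw) e.hqb
            have heq := rs_eq hP e hw hlw hyw hqb'
            have step1 : RStep (retRes N x y pa pb qa qb)
                (cherryRes (retRes N x y pa pb qa qb) x w qa qb') (Pick.cherry x w) :=
              pers1.step (e.proper hP)
            have step2 : RStep (retRes N x w pa qa pb qb')
                (cherryRes (retRes N x w pa qa pb qb') x y pb qb) (Pick.cherry x y) :=
              pers2.step (e2.proper hP)
            have hO2 := ih _ hcard1 hG1 hO1 _ _ step2
            rw [← heq] at hO2
            exact orchard_prepend step1 hO2
        · -- disjoint reticulated cherries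
          have pers1 := rr_pers hP e e' hxz
          have pers2 := rr_pers hP e' e (fun h => hxz h.symm)
          have heq := rr_eq hP e e' hxz
          have step1 : RStep (retRes N x y pa pb qa qb)
              (retRes (retRes N x y pa pb qa qb) z w pa' pb' qa' qb') (Pick.ret z w) :=
            pers1.step (e.proper hP)
          have step2 : RStep (retRes N z w pa' pb' qa' qb')
              (retRes (retRes N z w pa' pb' qa' qb') x y pa pb qa qb) (Pick.ret x y) :=
            pers2.step (e'.proper hP)
          have hO2 := ih _ hcard1 hG1 hO1 _ _ step2
          rw [← heq] at hO2
          exact orchard_prepend step1 hO2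

end CherryAux
/-- Every maximal cherry-reduction sequence of a rooted orchard network is
complete. -/
theorem maximal_is_complete_of_orchard (R : DNet) (X : Finset ℕ) (Ns : ℕ → DNet) (k : ℕ)
    (hR : IsRootedBinaryNet R X) (horch : Orchard R) (h0 : Ns 0 = R)
    (hseq : RReductionSeq Ns k)
    (hmax : ∀ a b, ¬ RCherry (Ns k) a b ∧ ¬ RRetCherry (Ns k) a b) :
    (Ns k).SingleVertex := by
  have key : ∀ i ≤ k, CherryAux.Good (Ns i) ∧ Orchard (Ns i) := by
    intro i
    induction i with
    | zero =>
      intro _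
      rw [h0]
      exact ⟨CherryAux.good_of_binary hR, horch⟩
    | succ j ihj =>
      intro hjk
      obtain ⟨hGj, hOj⟩ := ihj (by omega)
      obtain ⟨r, hr⟩ := hseq j (by omega)
      exact ⟨CherryAux.good_step hGj hr,
        CherryAux.orchard_preserved (Ns j).verts.card (Ns j) le_rfl hGj hOj _ _ hr⟩
  obtain ⟨hGk, hOk⟩ := key k le_rfl
  by_contra hns
  obtain ⟨a, b, h⟩ := CherryAux.orchard_pair hOk hns
  rcases h with h | h
  · exact (hmax a b).1 h
  · exact (hmax a b).2 h
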